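/- arXiv:0707.0313 — 4 statements merged into one kernel-verified Lean document; each statement's English description precedes it below -/
import Mathlib

section
/- Let x : [0,1] → B be of finite ρ-variation. Then for every s < t in [0,1], the ρ'-variation |x|_{ρ'-var;[s,t]} converges to |x|_{ρ-var;[s,t]} as ρ' decreases to ρ. In particular ω(s,t) := lim_{ρ'↓ρ} |x|^{ρ'}_{ρ'-var;[s,t]} is a superadditive function dominating |x|^ρ_{ρ-var;[s,t]}. -/
/-- A dissection (subdivision) of the interval `[s,t]`:
a monotone tuple starting at `s` and ending at `t`. -/
def IsDissection (s t : ℝ) {n : ℕ} (P : Fin (n + 1) → ℝ) : Prop :=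
  Monotone P ∧ P 0 = s ∧ P (Fin.last n) = t

/-- The rectangular increment `f((s,t),(u,v)) = f(s,u)+f(t,v)-f(s,v)-f(t,u)`. -/
def rectInc {B : Type*} [NormedAddCommGroup B] (f : ℝ → ℝ → B) (s t u v : ℝ) : B :=
  f s u + f t v - f s v - f t u

/-- The set of approximating sums for the 2D `ρ`-variation of `f` over `[s,t] × [u,v]`:
sums over pairs of dissections of the `ρ`-th powers of rectangular increments. -/
def varSums2D {B : Type*} [NormedAddCommGroup B] (f : ℝ → ℝ → B)
    (ρ s t u v : ℝ) : Set ℝ :=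
  { x | ∃ (n m : ℕ) (P : Fin (n + 1) → ℝ) (Q : Fin (m + 1) → ℝ),
      IsDissection s t P ∧ IsDissection u v Q ∧
      x = ∑ i : Fin n, ∑ j : Fin m,
        ‖rectInc f (P i.castSucc) (P i.succ) (Q j.castSucc) (Q j.succ)‖ ^ ρ }

/-- The set of approximating sums for the (1D) `ρ`-variation of a path over `[s,t]`. -/
def varSums1D {B : Type*} [NormedAddCommGroup B] (x : ℝ → B) (ρ s t : ℝ) : Set ℝ :=
  { y | ∃ (n : ℕ) (P : Fin (n + 1) → ℝ), IsDissection s t P ∧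
      y = ∑ i : Fin n, ‖x (P i.succ) - x (P i.castSucc)‖ ^ ρ }

/-! The sums `∑ ‖x_{t_i t_{i+1}}‖^σ` over a fixed dissection are continuous in `σ`, so the
`σ`-variation norm, a supremum of them, is lower semicontinuous in `σ`; and by
`∑ aᵢ^{σ/ρ} ≤ (∑ aᵢ)^{σ/ρ}` it is nonincreasing in `σ`. Together these give convergence as
`σ ↓ ρ`. Superadditivity of `ω = |x|^ρ_{ρ-var}` comes from concatenating dissections. -/

open Filter Topology Finset

theorem Finset.sum_rpow_le_rpow_sum {ι : Type*} (s : Finset ι) {f : ι → ℝ}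
    (hf : ∀ i ∈ s, 0 ≤ f i) {p : ℝ} (hp : 1 ≤ p) : ∑ i ∈ s, f i ^ p ≤ (∑ i ∈ s, f i) ^ p := by
  classical
  induction s using Finset.induction_on with
  | empty => simp [Real.zero_rpow (by positivity : p ≠ 0)]
  | insert j s hj ih =>
    rw [sum_insert hj, sum_insert hj]
    have hs : ∀ i ∈ s, 0 ≤ f i := fun i hi => hf i (mem_insert_of_mem hi)
    calc f j ^ p + ∑ i ∈ s, f i ^ p ≤ f j ^ p + (∑ i ∈ s, f i) ^ p := by gcongr; exact ih hs
      _ ≤ (f j + ∑ i ∈ s, f i) ^ p :=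
        Real.add_rpow_le_rpow_add (hf j (mem_insert_self j s)) (sum_nonneg hs) hp

theorem continuousAt_sum_rpow_rpow_inv {ι : Type*} (s : Finset ι) (a : ι → ℝ) {ρ : ℝ}
    (hρ : ρ ≠ 0) (hpos : 0 < ∑ i ∈ s, a i ^ ρ) :
    ContinuousAt (fun σ => (∑ i ∈ s, a i ^ σ) ^ σ⁻¹) ρ :=
  (tendsto_finsetSum s fun _ _ => Real.continuousAt_const_rpow' hρ).rpow
    (continuousAt_inv₀ hρ) (Or.inl hpos.ne')

section VarSums1D

variable {B : Type*} [NormedAddCommGroup B] {x : ℝ → B} {ρ σ s t u y : ℝ}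

theorem nonneg_of_mem_varSums1D (hy : y ∈ varSums1D x ρ s t) : 0 ≤ y := by
  obtain ⟨n, P, -, rfl⟩ := hy
  exact sum_nonneg fun i _ => Real.rpow_nonneg (norm_nonneg _) _

theorem norm_sub_rpow_mem_varSums1D (x : ℝ → B) (ρ : ℝ) (hst : s ≤ t) :
    ‖x t - x s‖ ^ ρ ∈ varSums1D x ρ s t := by
  refine ⟨1, ![s, t], ⟨?_, rfl, rfl⟩, by simp⟩
  intro a b hab
  fin_cases a <;> fin_cases b <;> simp_all

theorem varSums1D_nonempty (x : ℝ → B) (ρ : ℝ) (hst : s ≤ t) : (varSums1D x ρ s t).Nonempty :=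
  ⟨_, norm_sub_rpow_mem_varSums1D x ρ hst⟩

/-- `ℕ`-indexed dissections are easier to concatenate. -/
theorem mem_varSums1D_iff : y ∈ varSums1D x ρ s t ↔ ∃ (n : ℕ) (p : ℕ → ℝ), Monotone p ∧
    p 0 = s ∧ p n = t ∧ y = ∑ i ∈ range n, ‖x (p (i + 1)) - x (p i)‖ ^ ρ := by
  constructor
  · rintro ⟨n, P, ⟨hP, hP0, hPn⟩, rfl⟩
    refine ⟨n, fun k => P ⟨min k n, by omega⟩,
      fun a b hab => hP (Fin.mk_le_mk.2 (min_le_min_right n hab)),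
      by simpa using hP0, (congrArg P (Fin.ext (by simp))).trans hPn, ?_⟩
    rw [← Fin.sum_univ_eq_sum_range (fun i => ‖x (P ⟨min (i + 1) n, _⟩) - x (P ⟨min i n, _⟩)‖ ^ ρ)]
    refine sum_congr rfl fun i _ => ?_
    congr <;> simp [Fin.ext_iff]
  · rintro ⟨n, p, hp, hp0, hpn, rfl⟩
    refine ⟨n, fun k => p k, ⟨fun a b hab => hp hab, hp0, hpn⟩, ?_⟩
    simp [Fin.sum_univ_eq_sum_range (fun i => ‖x (p (i + 1)) - x (p i)‖ ^ ρ)]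

theorem add_mem_varSums1D {a b : ℝ} (ha : a ∈ varSums1D x ρ s t) (hb : b ∈ varSums1D x ρ t u) :
    a + b ∈ varSums1D x ρ s u := by
  obtain ⟨n, p, hp, hp0, hpn, rfl⟩ := mem_varSums1D_iff.1 ha
  obtain ⟨m, q, hq, hq0, hqm, rfl⟩ := mem_varSums1D_iff.1 hb
  set r : ℕ → ℝ := fun k => if k ≤ n then p k else q (k - n) with hr
  have hrp : ∀ k ≤ n, r k = p k := fun k hk => if_pos hk
  have hrq : ∀ i, r (n + i) = q i := by
    intro i
    rcases Nat.eq_zero_or_pos i with rfl | hi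
    · simp [hr, hpn, hq0]
    · simp [hr, show ¬ n + i ≤ n by omega]
  have hrmono : Monotone r := by
    intro k l hkl
    simp only [hr]
    split_ifs with hk hl hl
    · exact hp hkl
    · calc p k ≤ p n := hp hk
        _ = q (0 : ℕ) := hpn.trans hq0.symm
        _ ≤ q (l - n) := hq (Nat.zero_le _)
    · omega
    · exact hq (by omega)
  refine mem_varSums1D_iff.2 ⟨n + m, r, hrmono, by simp [hrp, hp0], by simp [hrq, hqm], ?_⟩
  rw [sum_range_add]
  congr 1
  · exact sum_congr rfl fun i hi => by
      rw [hrp i (by simp at hi; omega), hrp (i + 1) (by simp at hi; omega)]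
  · exact sum_congr rfl fun i _ => by rw [add_assoc, hrq, hrq]

theorem bddAbove_varSums1D_of_le {s' t' : ℝ} (hs : s' ≤ s) (ht : t ≤ t')
    (hbdd : BddAbove (varSums1D x ρ s' t')) : BddAbove (varSums1D x ρ s t) := by
  obtain ⟨C, hC⟩ := hbdd
  refine ⟨C, fun y hy => ?_⟩
  have hext := add_mem_varSums1D (add_mem_varSums1D (norm_sub_rpow_mem_varSums1D x ρ hs) hy)
    (norm_sub_rpow_mem_varSums1D x ρ ht)
  have := hC hext
  linarith [Real.rpow_nonneg (norm_nonneg (x s - x s')) ρ,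
    Real.rpow_nonneg (norm_nonneg (x t' - x t)) ρ]

theorem norm_sub_rpow_le_sSup_varSums1D (hst : s ≤ t) (hbdd : BddAbove (varSums1D x ρ s t)) :
    ‖x t - x s‖ ^ ρ ≤ sSup (varSums1D x ρ s t) :=
  le_csSup hbdd (norm_sub_rpow_mem_varSums1D x ρ hst)

theorem sSup_varSums1D_nonneg (hst : s ≤ t) (hbdd : BddAbove (varSums1D x ρ s t)) :
    0 ≤ sSup (varSums1D x ρ s t) :=
  (Real.rpow_nonneg (norm_nonneg _) _).trans (norm_sub_rpow_le_sSup_varSums1D hst hbdd)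

theorem sSup_varSums1D_add_le (hst : s ≤ t) (htu : t ≤ u)
    (hbdd : BddAbove (varSums1D x ρ s u)) :
    sSup (varSums1D x ρ s t) + sSup (varSums1D x ρ t u) ≤ sSup (varSums1D x ρ s u) := by
  rw [← csSup_add (varSums1D_nonempty x ρ hst) (bddAbove_varSums1D_of_le le_rfl htu hbdd)
    (varSums1D_nonempty x ρ htu) (bddAbove_varSums1D_of_le hst le_rfl hbdd)]
  refine csSup_le_csSup hbdd ((varSums1D_nonempty x ρ hst).add (varSums1D_nonempty x ρ htu)) ?_
  rintro _ ⟨a, ha, b, hb, rfl⟩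
  exact add_mem_varSums1D ha hb

theorem le_sSup_varSums1D_rpow_div (hρ : 0 < ρ) (hρσ : ρ ≤ σ)
    (hbdd : BddAbove (varSums1D x ρ s t)) (hy : y ∈ varSums1D x σ s t) :
    y ≤ sSup (varSums1D x ρ s t) ^ (σ / ρ) := by
  obtain ⟨n, P, hP, rfl⟩ := hy
  set a : Fin n → ℝ := fun i => ‖x (P i.succ) - x (P i.castSucc)‖ ^ ρ
  have ha : ∑ i, a i ∈ varSums1D x ρ s t := ⟨n, P, hP, rfl⟩
  calc ∑ i : Fin n, ‖x (P i.succ) - x (P i.castSucc)‖ ^ σ = ∑ i, a i ^ (σ / ρ) := by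
        refine sum_congr rfl fun i _ => ?_
        rw [← Real.rpow_mul (norm_nonneg _), mul_div_cancel₀ σ hρ.ne']
    _ ≤ (∑ i, a i) ^ (σ / ρ) :=
        sum_rpow_le_rpow_sum _ (fun i _ => Real.rpow_nonneg (norm_nonneg _) _)
          ((one_le_div hρ).2 hρσ)
    _ ≤ sSup (varSums1D x ρ s t) ^ (σ / ρ) :=
        Real.rpow_le_rpow (nonneg_of_mem_varSums1D ha) (le_csSup hbdd ha)
          (div_nonneg (hρ.trans_le hρσ).le hρ.le)

theorem bddAbove_varSums1D_of_le_exponent (hρ : 0 < ρ) (hρσ : ρ ≤ σ)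
    (hbdd : BddAbove (varSums1D x ρ s t)) : BddAbove (varSums1D x σ s t) :=
  ⟨_, fun _ hy => le_sSup_varSums1D_rpow_div hρ hρσ hbdd hy⟩

theorem sSup_varSums1D_rpow_inv_le (hρ : 0 < ρ) (hρσ : ρ ≤ σ) (hst : s ≤ t)
    (hbdd : BddAbove (varSums1D x ρ s t)) :
    sSup (varSums1D x σ s t) ^ σ⁻¹ ≤ sSup (varSums1D x ρ s t) ^ ρ⁻¹ := by
  have hσ : 0 < σ := hρ.trans_le hρσ
  calc sSup (varSums1D x σ s t) ^ σ⁻¹ ≤ (sSup (varSums1D x ρ s t) ^ (σ / ρ)) ^ σ⁻¹ := by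
        refine Real.rpow_le_rpow
          (sSup_varSums1D_nonneg hst (bddAbove_varSums1D_of_le_exponent hρ hρσ hbdd)) ?_
          (inv_nonneg.2 hσ.le)
        exact csSup_le (varSums1D_nonempty x σ hst) fun _ hy =>
          le_sSup_varSums1D_rpow_div hρ hρσ hbdd hy
    _ = sSup (varSums1D x ρ s t) ^ ρ⁻¹ := by
        rw [← Real.rpow_mul (sSup_varSums1D_nonneg hst hbdd)]
        field_simp

theorem eventually_lt_sSup_varSums1D_rpow_inv (hρ : 0 < ρ) (hst : s ≤ t)
    (hbdd : BddAbove (varSums1D x ρ s t)) {b : ℝ} (hb : b < sSup (varSums1D x ρ s t) ^ ρ⁻¹) :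
    ∀ᶠ σ in 𝓝[>] ρ, b < sSup (varSums1D x σ s t) ^ σ⁻¹ := by
  have hbddσ : ∀ σ ∈ Set.Ioi ρ, BddAbove (varSums1D x σ s t) := fun σ hσ =>
    bddAbove_varSums1D_of_le_exponent hρ (le_of_lt hσ) hbdd
  rcases lt_or_ge b 0 with hb0 | hb0
  · filter_upwards [self_mem_nhdsWithin] with σ hσ
    exact hb0.trans_le (Real.rpow_nonneg (sSup_varSums1D_nonneg hst (hbddσ σ hσ)) _)
  have hbρ : b ^ ρ < sSup (varSums1D x ρ s t) := by
    have := Real.rpow_lt_rpow hb0 hb hρ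
    rwa [Real.rpow_inv_rpow (sSup_varSums1D_nonneg hst hbdd) hρ.ne'] at this
  obtain ⟨_, ⟨n, P, hP, rfl⟩, hby⟩ := exists_lt_of_lt_csSup (varSums1D_nonempty x ρ hst) hbρ
  set a : Fin n → ℝ := fun i => ‖x (P i.succ) - x (P i.castSucc)‖
  have hlt : b < (∑ i, a i ^ ρ) ^ ρ⁻¹ := by
    have := Real.rpow_lt_rpow (Real.rpow_nonneg hb0 _) hby (inv_pos.2 hρ)
    rwa [Real.rpow_rpow_inv hb0 hρ.ne'] at this
  have hev := (continuousAt_sum_rpow_rpow_inv univ a hρ.ne'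
    ((Real.rpow_nonneg hb0 _).trans_lt hby)).eventually (eventually_gt_nhds hlt)
  filter_upwards [nhdsWithin_le_nhds hev, self_mem_nhdsWithin] with σ hσ hρσ
  have hmem : ∑ i, a i ^ σ ∈ varSums1D x σ s t := ⟨n, P, hP, rfl⟩
  exact hσ.trans_le (Real.rpow_le_rpow (nonneg_of_mem_varSums1D hmem)
    (le_csSup (hbddσ σ hρσ) hmem) (inv_nonneg.2 (hρ.trans hρσ).le))

theorem tendsto_sSup_varSums1D_rpow_inv (hρ : 0 < ρ) (hst : s ≤ t)
    (hbdd : BddAbove (varSums1D x ρ s t)) :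
    Tendsto (fun σ => sSup (varSums1D x σ s t) ^ σ⁻¹) (𝓝[>] ρ)
      (𝓝 (sSup (varSums1D x ρ s t) ^ ρ⁻¹)) := by
  refine tendsto_order.2 ⟨fun b hb => eventually_lt_sSup_varSums1D_rpow_inv hρ hst hbdd hb,
    fun b hb => ?_⟩
  filter_upwards [self_mem_nhdsWithin] with σ hσ
  exact (sSup_varSums1D_rpow_inv_le hρ (le_of_lt hσ) hst hbdd).trans_lt hb

end VarSums1D

/-- for `x : [0,1] → B` of finite `ρ`-variation, the `ρ'`-variation
`|x|_{ρ'-var;[s,t]}` converges to `|x|_{ρ-var;[s,t]}` as `ρ' ↓ ρ`, for every `s < t`;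
in particular `ω(s,t) := |x|^ρ_{ρ-var;[s,t]}` is superadditive and dominates
`‖x_{s,t}‖^ρ`. -/
theorem stmt_3 {B : Type*} [NormedAddCommGroup B]
    (x : ℝ → B) (ρ : ℝ) (hρ : 1 ≤ ρ)
    (hfin : BddAbove (varSums1D x ρ 0 1)) :
    (∀ s t, 0 ≤ s → s < t → t ≤ 1 →
      Filter.Tendsto (fun ρ' => (sSup (varSums1D x ρ' s t)) ^ ρ'⁻¹)
        (nhdsWithin ρ (Set.Ioi ρ)) (nhds ((sSup (varSums1D x ρ s t)) ^ ρ⁻¹))) ∧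
    (∀ s t u, 0 ≤ s → s ≤ t → t ≤ u → u ≤ 1 →
      sSup (varSums1D x ρ s t) + sSup (varSums1D x ρ t u) ≤ sSup (varSums1D x ρ s u)) ∧
    (∀ s t, 0 ≤ s → s ≤ t → t ≤ 1 →
      ‖x t - x s‖ ^ ρ ≤ sSup (varSums1D x ρ s t)) := by
  have hbdd : ∀ s t, 0 ≤ s → t ≤ 1 → BddAbove (varSums1D x ρ s t) := fun s t hs ht =>
    bddAbove_varSums1D_of_le hs ht hfin
  refine ⟨fun s t hs hst ht => ?_, fun s t u hs hst htu hu => ?_, fun s t hs hst ht => ?_⟩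
  · exact tendsto_sSup_varSums1D_rpow_inv (zero_lt_one.trans_le hρ) hst.le (hbdd s t hs ht)
  · exact sSup_varSums1D_add_le hst htu (hbdd s u hs hu)
  · exact norm_sub_rpow_le_sSup_varSums1D hst (hbdd s t hs ht)
end

section
/- For fractional Brownian motion B^H with H ∈ (0,1/2] and intervals [u,v] ⊂ [s,t], one has |E(B^H_{u,v} B^H_{s,t})| ≤ 2c_H (v-u)^{2H}, where c_H is the constant in the covariance formula. Consequently, for any dissection (t_i) of [s,t], Σ_i |E(B^H_{t_i,t_{i+1}} B^H_{s,t})|^{1/(2H)} ≤ C_H |t-s|. -/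
/-- The covariance of fractional Brownian motion `c_H (s^{2H} + t^{2H} - |t-s|^{2H})`
with `c_H = 1/2`. -/
noncomputable def fbmCov (H : ℝ) (s t : ℝ) : ℝ :=
  (1 / 2) * (s ^ (2 * H) + t ^ (2 * H) - |t - s| ^ (2 * H))

/-!
After the `s^{2H}`-type terms cancel, the covariance of two increments is
`½ (φ(t-u) + φ(v-s) - φ(u-s) - φ(t-v))` with `φ x = |x|^{2H}`. For `2H ≤ 1` the function `φ` is
monotone and subadditive on `[0, ∞)`, which squeezes this quantity between `0` and `2 φ(v-u)`.
Raising to the power `1/(2H)` bounds each term of the dissection sum by the length of its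
interval, and these lengths telescope to `t - s`.
-/

open Set Finset

lemma Fin.sum_succ_sub_castSucc {M : Type*} [AddCommGroup M] {n : ℕ} (P : Fin (n + 1) → M) :
    ∑ i : Fin n, (P i.succ - P i.castSucc) = P (Fin.last n) - P 0 := by
  cases n with
  | zero => simp
  | succ k =>
    rw [← Fin.succ_last, ← Fin.sum_Iic_sub (Fin.last k) P, ← Fin.top_eq_last, Finset.Iic_top]

lemma abs_add_sub_sub_le_of_subadditive {φ : ℝ → ℝ} (hφ_mono : MonotoneOn φ (Ici 0))
    (hφ_sub : ∀ x y, 0 ≤ x → 0 ≤ y → φ (x + y) ≤ φ x + φ y)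
    {s u v t : ℝ} (hsu : s ≤ u) (huv : u ≤ v) (hvt : v ≤ t) :
    |φ (t - u) + φ (v - s) - φ (u - s) - φ (t - v)| ≤ 2 * φ (v - u) := by
  have h_tv_tu : φ (t - v) ≤ φ (t - u) :=
    hφ_mono (sub_nonneg.2 hvt) (sub_nonneg.2 (huv.trans hvt)) (by linarith)
  have h_us_vs : φ (u - s) ≤ φ (v - s) :=
    hφ_mono (sub_nonneg.2 hsu) (sub_nonneg.2 (hsu.trans huv)) (by linarith)
  have h_tu : φ (t - u) ≤ φ (v - u) + φ (t - v) := by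
    simpa only [sub_add_sub_cancel'] using
      hφ_sub (v - u) (t - v) (sub_nonneg.2 huv) (sub_nonneg.2 hvt)
  have h_vs : φ (v - s) ≤ φ (v - u) + φ (u - s) := by
    simpa only [sub_add_sub_cancel] using
      hφ_sub (v - u) (u - s) (sub_nonneg.2 huv) (sub_nonneg.2 hsu)
  exact abs_le.2 ⟨by linarith, by linarith⟩

lemma monotoneOn_abs_rpow {p : ℝ} (hp : 0 ≤ p) : MonotoneOn (fun x : ℝ => |x| ^ p) (Ici 0) :=
  fun x hx y hy hxy => by
    simp only [abs_of_nonneg (mem_Ici.1 hx), abs_of_nonneg (mem_Ici.1 hy)]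
    exact Real.rpow_le_rpow hx hxy hp

lemma abs_add_rpow_le {p : ℝ} (hp0 : 0 ≤ p) (hp1 : p ≤ 1) (x y : ℝ) :
    |x + y| ^ p ≤ |x| ^ p + |y| ^ p :=
  calc |x + y| ^ p ≤ (|x| + |y|) ^ p := Real.rpow_le_rpow (abs_nonneg _) (abs_add_le x y) hp0
    _ ≤ |x| ^ p + |y| ^ p := Real.rpow_add_le_add_rpow (abs_nonneg _) (abs_nonneg _) hp0 hp1

lemma rectInc_fbmCov (H u v s t : ℝ) :
    rectInc (fbmCov H) u v s t =
      1 / 2 * (|t - u| ^ (2 * H) + |v - s| ^ (2 * H) - |u - s| ^ (2 * H) - |t - v| ^ (2 * H)) := by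
  simp only [rectInc, fbmCov, abs_sub_comm s u, abs_sub_comm s v]
  ring

lemma abs_rectInc_fbmCov_le {H : ℝ} (hH0 : 0 ≤ H) (hH : H ≤ 1 / 2)
    {s u v t : ℝ} (hsu : s ≤ u) (huv : u ≤ v) (hvt : v ≤ t) :
    |rectInc (fbmCov H) u v s t| ≤ (v - u) ^ (2 * H) := by
  have hp0 : 0 ≤ 2 * H := by linarith
  have h := abs_add_sub_sub_le_of_subadditive (monotoneOn_abs_rpow hp0)
    (fun x y _ _ => abs_add_rpow_le hp0 (by linarith) x y) hsu huv hvt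
  rw [rectInc_fbmCov, abs_mul, abs_of_pos one_half_pos]
  calc 1 / 2 * |_| ≤ 1 / 2 * (2 * |v - u| ^ (2 * H)) := by gcongr
    _ = (v - u) ^ (2 * H) := by rw [abs_of_nonneg (sub_nonneg.2 huv)]; ring

lemma sum_abs_rectInc_fbmCov_rpow_le {H : ℝ} (hH0 : 0 < H) (hH : H ≤ 1 / 2)
    {s t : ℝ} {n : ℕ} {P : Fin (n + 1) → ℝ} (hP : IsDissection s t P) :
    ∑ i : Fin n, |rectInc (fbmCov H) (P i.castSucc) (P i.succ) s t| ^ (1 / (2 * H)) ≤ t - s := by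
  obtain ⟨hmono, rfl, rfl⟩ := hP
  calc ∑ i : Fin n, |rectInc (fbmCov H) (P i.castSucc) (P i.succ) (P 0) (P (Fin.last n))| ^
        (1 / (2 * H))
      ≤ ∑ i : Fin n, (P i.succ - P i.castSucc) := by
        refine sum_le_sum fun i _ => ?_
        have hi := hmono (Fin.castSucc_le_succ i)
        rw [one_div, Real.rpow_inv_le_iff_of_pos (abs_nonneg _) (sub_nonneg.2 hi) (by positivity)]
        exact abs_rectInc_fbmCov_le hH0.le hH (hmono (Fin.zero_le _)) hi (hmono (Fin.le_last _))
    _ = P (Fin.last n) - P 0 := Fin.sum_succ_sub_castSucc P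

/-- for fBM with `H ∈ (0,1/2]` and `[u,v] ⊆ [s,t]` one has
`|E(B_{u,v} B_{s,t})| ≤ 2 c_H (v-u)^{2H}` (with `c_H = 1/2`), and consequently for any
dissection `(t_i)` of `[s,t]`, `Σ_i |E(B_{t_i,t_{i+1}} B_{s,t})|^{1/(2H)} ≤ C_H |t-s|`.
Here `E(B_{a,b} B_{c,d})` is the rectangular increment of the covariance. -/
theorem stmt_6 (H : ℝ) (hH0 : 0 < H) (hH : H ≤ 1 / 2) :
    (∀ s u v t : ℝ, 0 ≤ s → s ≤ u → u ≤ v → v ≤ t →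
      |rectInc (fbmCov H) u v s t| ≤ 2 * (1 / 2) * (v - u) ^ (2 * H)) ∧
    ∃ C : ℝ, 0 < C ∧
      ∀ (s t : ℝ), 0 ≤ s → s ≤ t →
        ∀ (n : ℕ) (P : Fin (n + 1) → ℝ), IsDissection s t P →
          (∑ i : Fin n, |rectInc (fbmCov H) (P i.castSucc) (P i.succ) s t| ^ (1 / (2 * H)))
            ≤ C * (t - s) := by
  refine ⟨fun s u v t _ hsu huv hvt => ?_, 1, one_pos, fun s t _ _ n P hP => ?_⟩
  · rw [mul_one_div_cancel two_ne_zero, one_mul]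
    exact abs_rectInc_fbmCov_le hH0.le hH hsu huv hvt
  · rw [one_mul]
    exact sum_abs_rectInc_fbmCov_rpow_le hH0 hH hP
end

section
/- Let X be a centered real-valued continuous Gaussian process on [0,1] with covariance R of finite 2D ρ-variation, and let H be its Cameron–Martin (reproducing kernel Hilbert) space. Then every h ∈ H has finite ρ-variation, and |h|_{ρ-var;[s,t]} ≤ √⟨h,h⟩_H · √(|R|_{ρ-var;[s,t]²}) for all s < t. -/
open MeasureTheory ProbabilityTheory

lemma Monotone.finSnoc {α : Type*} [Preorder α] {n : ℕ} {P : Fin (n + 1) → α} (hP : Monotone P)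
    {b : α} (hb : P (Fin.last n) ≤ b) : Monotone (Fin.snoc P b : Fin (n + 2) → α) := by
  refine Fin.monotone_iff_le_succ.mpr fun i => ?_
  induction i using Fin.lastCases with
  | last => simpa using hb
  | cast i =>
    rw [Fin.succ_castSucc, Fin.snoc_castSucc, Fin.snoc_castSucc]
    exact hP (Fin.castSucc_le_succ i)

lemma IsDissection.extend {s t a b : ℝ} {n : ℕ} {P : Fin (n + 1) → ℝ} (hP : IsDissection s t P)
    (has : a ≤ s) (htb : t ≤ b) :
    IsDissection a b (Fin.cons a (Fin.snoc P b) : Fin (n + 2 + 1) → ℝ) := by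
  obtain ⟨hmono, rfl, rfl⟩ := hP
  refine ⟨(hmono.finSnoc htb).vecCons ?_, rfl, ?_⟩
  · simpa using has
  · simp

namespace Fin

variable {α : Type*} {n : ℕ} (P : Fin (n + 1) → α) (a b : α) (i : Fin n)

lemma cons_snoc_castSucc_succ_castSucc :
    (cons a (snoc P b) : Fin (n + 2 + 1) → α) i.castSucc.succ.castSucc = P i.castSucc := by
  rw [← succ_castSucc, cons_succ, snoc_castSucc]

lemma cons_snoc_castSucc_succ_succ :
    (cons a (snoc P b) : Fin (n + 2 + 1) → α) i.castSucc.succ.succ = P i.succ := by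
  rw [cons_succ, succ_castSucc, snoc_castSucc]

end Fin

lemma sum_castSucc_succ_le {n : ℕ} (F : Fin (n + 2) → ℝ) (hF : ∀ k, 0 ≤ F k) :
    ∑ i : Fin n, F i.castSucc.succ ≤ ∑ k, F k := by
  rw [Fin.sum_univ_succ, Fin.sum_univ_castSucc]
  linarith [hF 0, hF (Fin.last _).succ]

lemma sum_sum_castSucc_succ_le {n m : ℕ} (g : Fin (n + 2) → Fin (m + 2) → ℝ)
    (hg : ∀ k l, 0 ≤ g k l) :
    ∑ i : Fin n, ∑ j : Fin m, g i.castSucc.succ j.castSucc.succ ≤ ∑ k, ∑ l, g k l :=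
  (Finset.sum_le_sum fun _ _ => sum_castSucc_succ_le _ fun l => hg _ l).trans
    (sum_castSucc_succ_le _ fun k => Finset.sum_nonneg fun l _ => hg k l)

lemma le_sSup_varSums2D_of_mem {B : Type*} [NormedAddCommGroup B] {f : ℝ → ℝ → B}
    {ρ a b c d s t u v : ℝ} (has : a ≤ s) (htb : t ≤ b) (hcu : c ≤ u) (hvd : v ≤ d)
    (hbdd : BddAbove (varSums2D f ρ a b c d)) {x : ℝ} (hx : x ∈ varSums2D f ρ s t u v) :
    x ≤ sSup (varSums2D f ρ a b c d) := by
  obtain ⟨n, m, P, Q, hP, hQ, rfl⟩ := hx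
  refine le_trans ?_
    (le_csSup hbdd ⟨n + 2, m + 2, _, _, hP.extend has htb, hQ.extend hcu hvd, rfl⟩)
  refine le_of_eq_of_le ?_
    (sum_sum_castSucc_succ_le _ fun _ _ => Real.rpow_nonneg (norm_nonneg _) _)
  simp only [Fin.cons_snoc_castSucc_succ_castSucc, Fin.cons_snoc_castSucc_succ_succ]

section HolderDuality

variable {ι : Type*} [Fintype ι] {ρ : ℝ}

lemma abs_rpow_sub_two_mul_self_mul_self (hρ : 1 ≤ ρ) (x : ℝ) :
    |x| ^ (ρ - 2) * x * x = |x| ^ ρ := by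
  rcases eq_or_ne x 0 with rfl | hx
  · simp [Real.zero_rpow (by linarith : ρ ≠ 0)]
  · rw [mul_assoc, ← sq, ← sq_abs, ← Real.rpow_natCast, ← Real.rpow_add (abs_pos.mpr hx)]
    norm_num

lemma abs_abs_rpow_sub_two_mul_self_le (x : ℝ) : |(|x| ^ (ρ - 2) * x)| ≤ |x| ^ (ρ - 1) := by
  rcases eq_or_ne x 0 with rfl | hx
  · simp [Real.rpow_nonneg]
  · rw [abs_mul, abs_of_nonneg (Real.rpow_nonneg (abs_nonneg x) _),
      ← Real.rpow_add_one (abs_pos.mpr hx).ne', show ρ - 2 + 1 = ρ - 1 by ring]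

lemma sum_sum_rpow_sub_one_mul_le (hρ : 1 ≤ ρ) {d : ι → ℝ} {r : ι → ι → ℝ}
    (hd : ∀ i, 0 ≤ d i) (hr : ∀ i j, 0 ≤ r i j) :
    ∑ i, ∑ j, d i ^ (ρ - 1) * d j ^ (ρ - 1) * r i j ≤
      ((∑ i, d i ^ ρ) ^ (1 - ρ⁻¹)) ^ 2 * (∑ i, ∑ j, r i j ^ ρ) ^ ρ⁻¹ := by
  rcases hρ.eq_or_lt with rfl | hρ1
  · simp
  have hpq : (ρ / (ρ - 1)).HolderConjugate ρ :=
    ((Real.holderConjugate_iff_eq_conjExponent hρ1).mpr rfl).symm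
  have hS : 0 ≤ ∑ i, d i ^ ρ := Finset.sum_nonneg fun i _ => Real.rpow_nonneg (hd i) _
  have holder := Real.inner_le_Lp_mul_Lq_of_nonneg Finset.univ hpq
    (f := fun ij : ι × ι => d ij.1 ^ (ρ - 1) * d ij.2 ^ (ρ - 1)) (g := fun ij => r ij.1 ij.2)
    (fun ij _ => mul_nonneg (Real.rpow_nonneg (hd _) _) (Real.rpow_nonneg (hd _) _))
    (fun _ _ => hr _ _)
  simp only [Fintype.sum_prod_type] at holder
  have hpow : ∀ i j, (d i ^ (ρ - 1) * d j ^ (ρ - 1)) ^ (ρ / (ρ - 1)) = d i ^ ρ * d j ^ ρ := by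
    intro i j
    rw [Real.mul_rpow (Real.rpow_nonneg (hd i) _) (Real.rpow_nonneg (hd j) _),
      ← Real.rpow_mul (hd i), ← Real.rpow_mul (hd j), mul_div_cancel₀ _ (by linarith)]
  have hexp : 1 / (ρ / (ρ - 1)) = 1 - ρ⁻¹ := by field_simp
  simp only [hpow, ← Finset.sum_mul_sum, hexp, one_div] at holder
  rwa [sq, ← Real.mul_rpow hS hS]

theorem sum_abs_inner_rpow_rpow_inv_le {E : Type*} [NormedAddCommGroup E] [InnerProductSpace ℝ E]
    (hρ : 1 ≤ ρ) (z : E) (v : ι → E) :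
    (∑ i, |inner ℝ z (v i)| ^ ρ) ^ ρ⁻¹ ≤ ‖z‖ * √((∑ i, ∑ j, |inner ℝ (v i) (v j)| ^ ρ) ^ ρ⁻¹) := by
  set d : ι → ℝ := fun i => inner ℝ z (v i)
  set S := ∑ i, |d i| ^ ρ
  set N := (∑ i, ∑ j, |inner ℝ (v i) (v j)| ^ ρ) ^ ρ⁻¹
  have hS : 0 ≤ S := Finset.sum_nonneg fun i _ => Real.rpow_nonneg (abs_nonneg _) _
  set β : ι → ℝ := fun i => |d i| ^ (ρ - 2) * d i
  set y : E := ∑ i, β i • v i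
  have hSy : S = inner ℝ z y := by
    simp only [y, inner_sum, inner_smul_right, S, β]
    exact Finset.sum_congr rfl fun i _ => (abs_rpow_sub_two_mul_self_mul_self hρ _).symm
  have hy : ‖y‖ ^ 2 ≤ (S ^ (1 - ρ⁻¹)) ^ 2 * N :=
    calc ‖y‖ ^ 2 = ∑ i, ∑ j, β i * β j * inner ℝ (v i) (v j) := by
          rw [← real_inner_self_eq_norm_sq]
          simp only [y, sum_inner, inner_sum, inner_smul_left, inner_smul_right, conj_trivial,
            Finset.mul_sum]
          exact Finset.sum_comm.trans (Finset.sum_congr rfl fun i _ =>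
            Finset.sum_congr rfl fun j _ => by ring)
      _ ≤ ∑ i, ∑ j, |d i| ^ (ρ - 1) * |d j| ^ (ρ - 1) * |inner ℝ (v i) (v j)| := by
          refine Finset.sum_le_sum fun i _ => Finset.sum_le_sum fun j _ => ?_
          calc β i * β j * inner ℝ (v i) (v j) ≤ |β i| * |β j| * |inner ℝ (v i) (v j)| := by
                rw [← abs_mul, ← abs_mul]; exact le_abs_self _
            _ ≤ _ := by
                gcongr
                exacts [abs_abs_rpow_sub_two_mul_self_le _, abs_abs_rpow_sub_two_mul_self_le _]
      _ ≤ (S ^ (1 - ρ⁻¹)) ^ 2 * N :=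
          sum_sum_rpow_sub_one_mul_le hρ (fun _ => abs_nonneg _) fun _ _ => abs_nonneg _
  have key : S ≤ ‖z‖ * √N * S ^ (1 - ρ⁻¹) :=
    calc S ≤ ‖z‖ * ‖y‖ := hSy ▸ real_inner_le_norm z y
      _ ≤ ‖z‖ * (S ^ (1 - ρ⁻¹) * √N) := by
          gcongr
          rw [← Real.sqrt_sq (norm_nonneg y), ← Real.sqrt_sq (Real.rpow_nonneg hS _),
            ← Real.sqrt_mul (sq_nonneg _)]
          exact Real.sqrt_le_sqrt hy
      _ = _ := by ring
  rcases hS.eq_or_lt with hS0 | hSpos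
  · rw [← hS0, Real.zero_rpow (inv_ne_zero (by linarith))]
    positivity
  · refine le_of_mul_le_mul_right ?_ (Real.rpow_pos_of_pos hSpos (1 - ρ⁻¹))
    rwa [← Real.rpow_add hSpos, add_sub_cancel, Real.rpow_one]

end HolderDuality

lemma bddAbove_and_sSup_rpow_inv_le {S : Set ℝ} {ρ K : ℝ} (hρ : 0 < ρ) (hK : 0 ≤ K)
    (h : ∀ y ∈ S, 0 ≤ y ∧ y ^ ρ⁻¹ ≤ K) : BddAbove S ∧ sSup S ^ ρ⁻¹ ≤ K := by
  have hle : ∀ y ∈ S, y ≤ K ^ ρ := fun y hy =>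
    (Real.rpow_inv_le_iff_of_pos (h y hy).1 hK hρ).mp (h y hy).2
  refine ⟨⟨K ^ ρ, hle⟩, (Real.rpow_inv_le_iff_of_pos ?_ hK hρ).mpr ?_⟩
  · exact Real.sSup_nonneg fun y hy => (h y hy).1
  · exact Real.sSup_le hle (Real.rpow_nonneg hK ρ)

section CameronMartin

variable {Ω : Type*} [MeasurableSpace Ω] {μ : Measure Ω}

lemma MeasureTheory.MemLp.inner_toLp {f g : Ω → ℝ} (hf : MemLp f 2 μ) (hg : MemLp g 2 μ) :
    inner ℝ (hf.toLp f) (hg.toLp g) = ∫ ω, f ω * g ω ∂μ := by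
  rw [L2.inner_def]
  refine integral_congr_ae ?_
  filter_upwards [hf.coeFn_toLp, hg.coeFn_toLp] with ω hfω hgω
  simp [hfω, hgω, mul_comm]

lemma MeasureTheory.MemLp.norm_toLp_two {f : Ω → ℝ} (hf : MemLp f 2 μ) :
    ‖hf.toLp f‖ = √(∫ ω, f ω ^ 2 ∂μ) := by
  rw [← Real.sqrt_sq (norm_nonneg _), ← real_inner_self_eq_norm_sq, hf.inner_toLp hf]
  simp only [sq]

theorem cameronMartin_sum_rpow_rpow_inv_le {ρ : ℝ} (hρ : 1 ≤ ρ) {X : ℝ → Ω → ℝ} {Z : Ω → ℝ}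
    (hX : ∀ t, MemLp (X t) 2 μ) (hZ : MemLp Z 2 μ) {n : ℕ} (P : Fin (n + 1) → ℝ) :
    (∑ i : Fin n, ‖(∫ ω, Z ω * X (P i.succ) ω ∂μ) - ∫ ω, Z ω * X (P i.castSucc) ω ∂μ‖ ^ ρ) ^ ρ⁻¹
      ≤ √(∫ ω, Z ω ^ 2 ∂μ) * √((∑ i : Fin n, ∑ j : Fin n,
        ‖rectInc (fun a b => ∫ ω, X a ω * X b ω ∂μ) (P i.castSucc) (P i.succ)
          (P j.castSucc) (P j.succ)‖ ^ ρ) ^ ρ⁻¹) := by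
  let V : ℝ → Lp ℝ 2 μ := fun t => (hX t).toLp (X t)
  let v : Fin n → Lp ℝ 2 μ := fun i => V (P i.succ) - V (P i.castSucc)
  have hZv : ∀ i, inner ℝ (hZ.toLp Z) (v i) =
      (∫ ω, Z ω * X (P i.succ) ω ∂μ) - ∫ ω, Z ω * X (P i.castSucc) ω ∂μ := fun i => by
    simp only [v, V, inner_sub_right, MemLp.inner_toLp]
  have hvv : ∀ i j, inner ℝ (v i) (v j) = rectInc (fun a b => ∫ ω, X a ω * X b ω ∂μ)
      (P i.castSucc) (P i.succ) (P j.castSucc) (P j.succ) := fun i j => by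
    simp only [v, V, inner_sub_left, inner_sub_right, MemLp.inner_toLp, rectInc]
    ring
  simpa only [hZv, hvv, hZ.norm_toLp_two, Real.norm_eq_abs] using
    sum_abs_inner_rpow_rpow_inv_le hρ (hZ.toLp Z) v

end CameronMartin

theorem stmt_8_general {Ω : Type*} [MeasurableSpace Ω] (μ : Measure Ω)
    (X : ℝ → Ω → ℝ) (Z : Ω → ℝ) (ρ : ℝ) (hρ : 1 ≤ ρ)
    (hXL2 : ∀ t, MemLp (X t) 2 μ)
    (hZL2 : MemLp Z 2 μ)
    -- the covariance has finite 2D ρ-variation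
    (hfin : BddAbove (varSums2D (fun a b => ∫ ω, X a ω * X b ω ∂μ) ρ 0 1 0 1)) :
    ∀ s t, 0 ≤ s → s ≤ t → t ≤ 1 →
      BddAbove (varSums1D (fun u => ∫ ω, Z ω * X u ω ∂μ) ρ s t) ∧
      (sSup (varSums1D (fun u => ∫ ω, Z ω * X u ω ∂μ) ρ s t)) ^ ρ⁻¹ ≤
        Real.sqrt (∫ ω, Z ω ^ 2 ∂μ) *
          Real.sqrt ((sSup (varSums2D (fun a b => ∫ ω, X a ω * X b ω ∂μ) ρ s t s t)) ^ ρ⁻¹) := by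
  intro s t hs _ ht
  have hbdd : BddAbove (varSums2D (fun a b => ∫ ω, X a ω * X b ω ∂μ) ρ s t s t) :=
    ⟨_, fun _ hx => le_sSup_varSums2D_of_mem hs ht hs ht hfin hx⟩
  refine bddAbove_and_sSup_rpow_inv_le (by linarith) (by positivity) ?_
  rintro _ ⟨n, P, hP, rfl⟩
  refine ⟨by positivity, (cameronMartin_sum_rpow_rpow_inv_le hρ hXL2 hZL2 P).trans ?_⟩
  gcongr
  exact le_csSup hbdd ⟨n, n, P, P, hP, hP, rfl⟩

/-- Cameron–Martin embedding: let `X` be a centered continuous Gaussian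
process on `[0,1]` with covariance `R(a,b) = E(X_a X_b)` of finite 2D `ρ`-variation, and
let `h_t = E(Z X_t)` be a Cameron–Martin path (`Z` a Gaussian random variable measurable
with respect to `σ(X_t, t ∈ [0,1])`). Then `h` has finite `ρ`-variation with
`|h|_{ρ-var;[s,t]} ≤ √⟨h,h⟩_H √(|R|_{ρ-var;[s,t]²})`, where `⟨h,h⟩_H = E(Z²)`. -/
theorem stmt_8 {Ω : Type*} [MeasurableSpace Ω] (μ : Measure Ω) [IsProbabilityMeasure μ]
    (X : ℝ → Ω → ℝ) (Z : Ω → ℝ) (ρ : ℝ) (hρ : 1 ≤ ρ)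
    -- centered jointly Gaussian process with continuous sample paths
    (hGauss : ∀ (k : ℕ) (c : Fin k → ℝ) (ts : Fin k → ℝ),
      ∃ v : NNReal, μ.map (fun ω => ∑ i, c i * X (ts i) ω) = gaussianReal 0 v)
    (hmeas : ∀ t, Measurable (X t))
    (hcont : ∀ ω, ContinuousOn (fun t => X t ω) (Set.Icc 0 1))
    (hXL2 : ∀ t, MemLp (X t) 2 μ)
    -- `Z` is Gaussian and measurable with respect to the σ-algebra generated by `X`
    (hZGauss : ∃ v : NNReal, μ.map Z = gaussianReal 0 v)
    (hZmeas : @Measurable Ω ℝ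
      (⨆ t ∈ Set.Icc (0:ℝ) 1, MeasurableSpace.comap (X t) inferInstance) _ Z)
    (hZL2 : MemLp Z 2 μ)
    -- the covariance has finite 2D ρ-variation
    (hfin : BddAbove (varSums2D (fun a b => ∫ ω, X a ω * X b ω ∂μ) ρ 0 1 0 1)) :
    ∀ s t, 0 ≤ s → s ≤ t → t ≤ 1 →
      BddAbove (varSums1D (fun u => ∫ ω, Z ω * X u ω ∂μ) ρ s t) ∧
      (sSup (varSums1D (fun u => ∫ ω, Z ω * X u ω ∂μ) ρ s t)) ^ ρ⁻¹ ≤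
        Real.sqrt (∫ ω, Z ω ^ 2 ∂μ) *
          Real.sqrt ((sSup (varSums2D (fun a b => ∫ ω, X a ω * X b ω ∂μ) ρ s t s t)) ^ ρ⁻¹) :=
  stmt_8_general μ X Z ρ hρ hXL2 hZL2 hfin
end

section
/- Let g, h ∈ G^N(ℝ^d) be elements of the free step-N nilpotent group, with Carnot–Carathéodory norm ‖·‖. Then there exists C = C(N,d) such that ‖g^{-1}⊗h⊗g‖ ≤ C max{‖h‖, ‖h‖^{1/N} ‖g‖^{1-1/N}}. -/
/-- The (step-`N` truncated) tensor algebra over `ℝ^d`, with tensors represented by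
their coefficients on words in the letters `1,…,d`. -/
abbrev TTA (d : ℕ) := List (Fin d) → ℝ

/-- Truncated tensor product: coefficients of words of length `> N` are discarded. -/
def ttaMul (N d : ℕ) (x y : TTA d) : TTA d := fun w =>
  if w.length ≤ N then ∑ i ∈ Finset.range (w.length + 1), x (w.take i) * y (w.drop i) else 0

/-- The unit `1` of the truncated tensor algebra. -/
def ttaOne (d : ℕ) : TTA d := fun w => if w = [] then 1 else 0

/-- The signature `exp(v)` of a single linear segment with increment `v ∈ ℝ^d`. -/
noncomputable def segExp (N d : ℕ) (v : EuclideanSpace ℝ (Fin d)) : TTA d := fun w =>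
  if w.length ≤ N then (w.map fun a => v a).prod / (Nat.factorial w.length) else 0

/-- The step-`N` signature of the piecewise linear path with successive increments `L`. -/
noncomputable def pwProd (N d : ℕ) (L : List (EuclideanSpace ℝ (Fin d))) : TTA d :=
  L.foldl (fun acc v => ttaMul N d acc (segExp N d v)) (ttaOne d)

/-- The free step-`N` nilpotent group `G^N(ℝ^d)`: signatures of piecewise linear
(equivalently, of bounded variation) paths. -/
def FreeNilpotent (N d : ℕ) : Set (TTA d) := { g | ∃ L, pwProd N d L = g }

/-- The representation of the inverse path: reversed, negated increments. -/
def invList {d : ℕ} (L : List (EuclideanSpace ℝ (Fin d))) :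
    List (EuclideanSpace ℝ (Fin d)) := (L.map fun v => -v).reverse

-- The group inverse in `G^N(ℝ^d)`.
open Classical in
noncomputable def ttaInv (N d : ℕ) (g : TTA d) : TTA d :=
  if h : ∃ L, pwProd N d L = g then pwProd N d (invList h.choose) else ttaOne d

/-- The Carnot–Carathéodory norm: the infimal length of a path whose signature is `g`. -/
noncomputable def ccNorm (N d : ℕ) (g : TTA d) : ℝ :=
  sInf { r | ∃ L, pwProd N d L = g ∧ r = (L.map fun v => ‖v‖).sum }

/-- The Carnot–Carathéodory distance `d(g,h) = ‖g⁻¹ ⊗ h‖`. -/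
noncomputable def ccDist (N d : ℕ) (g h : TTA d) : ℝ :=
  ccNorm N d (ttaMul N d (ttaInv N d g) h)

/-!
Approximate `g` and `h` by piecewise linear paths of lengths `s ≈ ‖g‖` and `t ≈ ‖h‖`. Since
`g⁻¹ ⊗ h ⊗ g - 1 = g⁻¹ ⊗ (h - 1) ⊗ g`, each of its coefficients of degree `n ≤ N` is a sum of at
most `(n + 1)²` products bounded by `s ^ i t ^ q s ^ r` with `q ≥ 1`, `i + q + r = n`, and each such
monomial is at most `ε ^ n` for `ε = max(t, t^{1/N} s^{1 - 1/N})`. So the conjugate lies in the box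
`|x_w| ≤ (4ε) ^ |w|`, and it remains to prove the ball–box estimate `‖x‖ ≤ C ε` on that box.

For the latter, remove the levels of `x` one at a time. If `x` vanishes in degrees `1, …, k - 1`,
its degree-`k` part lies in the finite-dimensional space spanned by such parts of group elements;
in a fixed basis its coordinates are `O(ε ^ k)`, and a coordinate `c` times a basis element is
realised by a dilated (and, if `c < 0`, reversed) path of length `O(|c| ^ {1/k})`. Multiplying `x`
by the inverse of the concatenation of these paths kills degree `k` and keeps `x` in a box of size
`O(ε)`, at the cost of length `O(ε)`.
-/

lemma Submodule.exists_eq_sum_smul_abs_le {E : Type*} [NormedAddCommGroup E] [NormedSpace ℝ E]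
    [FiniteDimensional ℝ E] (p : Submodule ℝ E) :
    ∃ (M : ℕ) (u : Fin M → E) (D : ℝ), (∀ j, u j ∈ p) ∧ 0 ≤ D ∧
      ∀ ξ ∈ p, ∃ c : Fin M → ℝ, (∀ j, |c j| ≤ D * ‖ξ‖) ∧ ξ = ∑ j, c j • u j := by
  let b := Module.finBasis ℝ p
  let φ : p →L[ℝ] (Fin (Module.finrank ℝ p) → ℝ) := b.equivFunL.toContinuousLinearMap
  refine ⟨_, fun j => b j, ‖φ‖, fun j => (b j).2, norm_nonneg φ, fun ξ hξ => ?_⟩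
  refine ⟨φ ⟨ξ, hξ⟩, fun j => ?_, ?_⟩
  · calc |φ ⟨ξ, hξ⟩ j| = ‖φ ⟨ξ, hξ⟩ j‖ := (Real.norm_eq_abs _).symm
      _ ≤ ‖φ ⟨ξ, hξ⟩‖ := norm_le_pi_norm _ j
      _ ≤ ‖φ‖ * ‖ξ‖ := φ.le_opNorm _
  · have h := congrArg Subtype.val (b.sum_equivFun ⟨ξ, hξ⟩)
    simp only [AddSubmonoidClass.coe_finsetSum, SetLike.val_smul] at h
    exact h.symm

lemma Real.rpow_mul_rpow_one_sub_le_max {t s α β : ℝ} (ht : 0 < t) (hs : 0 < s) (hαβ : α ≤ β)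
    (hβ : β ≤ 1) : t ^ β * s ^ (1 - β) ≤ max t (t ^ α * s ^ (1 - α)) := by
  rcases le_total s t with hst | hts
  · calc t ^ β * s ^ (1 - β) ≤ t ^ β * t ^ (1 - β) := by gcongr
      _ = t := by rw [← Real.rpow_add ht]; simp
      _ ≤ _ := le_max_left _ _
  · calc t ^ β * s ^ (1 - β) = t ^ α * t ^ (β - α) * s ^ (1 - β) := by
          rw [← Real.rpow_add ht]; ring_nf
      _ ≤ t ^ α * s ^ (β - α) * s ^ (1 - β) := by gcongr
      _ = t ^ α * s ^ (1 - α) := by rw [mul_assoc, ← Real.rpow_add hs]; ring_nf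
      _ ≤ _ := le_max_right _ _

lemma pow_mul_pow_sub_le_max_pow {N q n : ℕ} {t s : ℝ} (ht : 0 < t) (hs : 0 < s) (hq : 1 ≤ q)
    (hqn : q ≤ n) (hnN : n ≤ N) :
    t ^ q * s ^ (n - q) ≤ (max t (t ^ (N : ℝ)⁻¹ * s ^ (1 - (N : ℝ)⁻¹))) ^ n := by
  have hn : (0 : ℝ) < n := by exact_mod_cast (show 0 < n by omega)
  set β : ℝ := q / n
  have hpow : (t ^ β * s ^ (1 - β)) ^ n = t ^ q * s ^ (n - q) := by
    rw [mul_pow, ← Real.rpow_mul_natCast ht.le, ← Real.rpow_mul_natCast hs.le,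
      show β * n = (q : ℝ) by simp only [β]; field_simp,
      show (1 - β) * n = ((n - q : ℕ) : ℝ) by push_cast [hqn]; simp only [β]; field_simp,
      Real.rpow_natCast, Real.rpow_natCast]
  rw [← hpow]
  refine pow_le_pow_left₀ (by positivity) (Real.rpow_mul_rpow_one_sub_le_max ht hs ?_ ?_) n
  · calc (N : ℝ)⁻¹ ≤ (n : ℝ)⁻¹ := inv_anti₀ hn (by exact_mod_cast hnN)
      _ ≤ β := by
        rw [show β = q * (n : ℝ)⁻¹ from div_eq_mul_inv _ _]
        exact le_mul_of_one_le_left (inv_nonneg.mpr hn.le) (by exact_mod_cast hq)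
  · exact div_le_one_of_le₀ (by exact_mod_cast hqn) hn.le

namespace TTA

variable {N d : ℕ}

lemma ttaMul_apply_of_le (x y : TTA d) {w : List (Fin d)} (hw : w.length ≤ N) :
    ttaMul N d x y w = ∑ i ∈ Finset.range (w.length + 1), x (w.take i) * y (w.drop i) :=
  if_pos hw

lemma ttaMul_apply_of_lt (x y : TTA d) {w : List (Fin d)} (hw : N < w.length) :
    ttaMul N d x y w = 0 :=
  if_neg (by omega)

lemma ttaOne_of_ne_nil {w : List (Fin d)} (hw : w ≠ []) : ttaOne d w = 0 := if_neg hw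

def IsTruncated (N : ℕ) {d : ℕ} (x : TTA d) : Prop := ∀ w : List (Fin d), N < w.length → x w = 0

lemma isTruncated_ttaMul (x y : TTA d) : IsTruncated N (ttaMul N d x y) :=
  fun _ hw => ttaMul_apply_of_lt x y hw

lemma isTruncated_segExp (v : EuclideanSpace ℝ (Fin d)) : IsTruncated N (segExp N d v) :=
  fun _ hw => if_neg (by omega)

lemma isTruncated_ttaOne : IsTruncated N (ttaOne d) :=
  fun _ hw => ttaOne_of_ne_nil (List.ne_nil_of_length_pos (by omega))

lemma ttaMul_assoc (x y z : TTA d) :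
    ttaMul N d (ttaMul N d x y) z = ttaMul N d x (ttaMul N d y z) := by
  funext w
  by_cases hw : w.length ≤ N
  swap
  · rw [ttaMul_apply_of_lt _ _ (by omega), ttaMul_apply_of_lt _ _ (by omega)]
  set n := w.length
  have hlhs : ∀ j ∈ Finset.range (n + 1), ttaMul N d x y (w.take j) * z (w.drop j) =
      ∑ i ∈ Finset.Ico 0 (j + 1), x (w.take i) * y ((w.drop i).take (j - i)) * z (w.drop j) := by
    intro j hj
    have hj : j ≤ n := Nat.lt_succ_iff.mp (Finset.mem_range.mp hj)
    rw [ttaMul_apply_of_le _ _ (by rw [List.length_take]; omega), List.length_take, min_eq_left hj,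
      Finset.range_eq_Ico, Finset.sum_mul]
    refine Finset.sum_congr rfl fun i hi => ?_
    rw [List.take_take, min_eq_left (Nat.lt_succ_iff.mp (Finset.mem_Ico.mp hi).2), List.drop_take]
  have hrhs : ∀ i ∈ Finset.range (n + 1), x (w.take i) * ttaMul N d y z (w.drop i) =
      ∑ j ∈ Finset.Ico i (n + 1), x (w.take i) * y ((w.drop i).take (j - i)) * z (w.drop j) := by
    intro i hi
    have hi : i ≤ n := Nat.lt_succ_iff.mp (Finset.mem_range.mp hi)
    rw [ttaMul_apply_of_le _ _ (by rw [List.length_drop]; omega), List.length_drop, Finset.mul_sum,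
      Finset.sum_Ico_eq_sum_range, show n + 1 - i = n - i + 1 by omega]
    refine Finset.sum_congr rfl fun q _ => ?_
    rw [Nat.add_sub_cancel_left, List.drop_drop, mul_assoc]
  rw [ttaMul_apply_of_le _ _ hw, ttaMul_apply_of_le _ _ hw, Finset.sum_congr rfl hlhs,
    Finset.sum_congr rfl hrhs, Finset.range_eq_Ico, Finset.sum_Ico_Ico_comm]

lemma ttaMul_ttaOne {x : TTA d} (hx : IsTruncated N x) : ttaMul N d x (ttaOne d) = x := by
  funext w
  by_cases hw : w.length ≤ N
  · rw [ttaMul_apply_of_le _ _ hw, Finset.sum_eq_single_of_mem w.length (by simp)]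
    · simp [ttaOne]
    · intro i hi hne
      rw [Finset.mem_range] at hi
      rw [ttaOne_of_ne_nil (List.ne_nil_of_length_pos (by rw [List.length_drop]; omega)), mul_zero]
  · rw [ttaMul_apply_of_lt _ _ (by omega), hx w (by omega)]

lemma ttaOne_ttaMul {x : TTA d} (hx : IsTruncated N x) : ttaMul N d (ttaOne d) x = x := by
  funext w
  by_cases hw : w.length ≤ N
  · rw [ttaMul_apply_of_le _ _ hw, Finset.sum_eq_single_of_mem 0 (by simp)]
    · simp [ttaOne]
    · intro i hi hne
      rw [Finset.mem_range] at hi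
      rw [ttaOne_of_ne_nil (List.ne_nil_of_length_pos (by rw [List.length_take]; omega)), zero_mul]
  · rw [ttaMul_apply_of_lt _ _ (by omega), hx w (by omega)]

lemma ttaMul_add (x y z : TTA d) :
    ttaMul N d x (y + z) = ttaMul N d x y + ttaMul N d x z := by
  funext w
  by_cases hw : w.length ≤ N
  · simp only [Pi.add_apply, ttaMul_apply_of_le _ _ hw, mul_add, Finset.sum_add_distrib]
  · simp only [Pi.add_apply, ttaMul_apply_of_lt _ _ (not_le.mp hw), add_zero]

lemma add_ttaMul (x y z : TTA d) :
    ttaMul N d (x + y) z = ttaMul N d x z + ttaMul N d y z := by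
  funext w
  by_cases hw : w.length ≤ N
  · simp only [Pi.add_apply, ttaMul_apply_of_le _ _ hw, add_mul, Finset.sum_add_distrib]
  · simp only [Pi.add_apply, ttaMul_apply_of_lt _ _ (not_le.mp hw), add_zero]

lemma foldl_segExp_eq_ttaMul (L : List (EuclideanSpace ℝ (Fin d))) {x : TTA d}
    (hx : IsTruncated N x) :
    L.foldl (fun acc v => ttaMul N d acc (segExp N d v)) x = ttaMul N d x (pwProd N d L) := by
  induction L generalizing x with
  | nil => exact (ttaMul_ttaOne hx).symm
  | cons v L ih =>
    rw [List.foldl_cons, ih (isTruncated_ttaMul _ _), ttaMul_assoc]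
    congr 1
    change _ = L.foldl _ (ttaMul N d (ttaOne d) (segExp N d v))
    rw [ttaOne_ttaMul (isTruncated_segExp v), ih (isTruncated_segExp v)]

lemma pwProd_nil : pwProd N d [] = ttaOne d := rfl

lemma isTruncated_pwProd (L : List (EuclideanSpace ℝ (Fin d))) : IsTruncated N (pwProd N d L) := by
  cases L with
  | nil => exact isTruncated_ttaOne
  | cons v L =>
    rw [pwProd, List.foldl_cons, foldl_segExp_eq_ttaMul _ (isTruncated_ttaMul _ _)]
    exact isTruncated_ttaMul _ _

lemma pwProd_append (A B : List (EuclideanSpace ℝ (Fin d))) :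
    pwProd N d (A ++ B) = ttaMul N d (pwProd N d A) (pwProd N d B) := by
  rw [pwProd, List.foldl_append, ← pwProd, foldl_segExp_eq_ttaMul _ (isTruncated_pwProd A)]

lemma pwProd_singleton (v : EuclideanSpace ℝ (Fin d)) : pwProd N d [v] = segExp N d v :=
  ttaOne_ttaMul (isTruncated_segExp v)

lemma pwProd_cons (v : EuclideanSpace ℝ (Fin d)) (L : List (EuclideanSpace ℝ (Fin d))) :
    pwProd N d (v :: L) = ttaMul N d (segExp N d v) (pwProd N d L) := by
  rw [← List.singleton_append, pwProd_append, pwProd_singleton]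

lemma pwProd_apply_nil (L : List (EuclideanSpace ℝ (Fin d))) : pwProd N d L [] = 1 := by
  induction L with
  | nil => rfl
  | cons v L ih => simp [pwProd_cons, ttaMul_apply_of_le, ih, segExp]

lemma segExp_smul (c : ℝ) (v : EuclideanSpace ℝ (Fin d)) (w : List (Fin d)) :
    segExp N d (c • v) w = c ^ w.length * segExp N d v w := by
  by_cases hw : w.length ≤ N
  · have hprod : ∀ u : List (Fin d),
        (u.map fun a => (c • v) a).prod = c ^ u.length * (u.map fun a => v a).prod := by
      intro u
      induction u with
      | nil => simp
      | cons a u ih =>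
        rw [List.map_cons, List.prod_cons, ih, List.map_cons, List.prod_cons, List.length_cons,
          pow_succ, PiLp.smul_apply, smul_eq_mul]
        ring
    simp only [segExp, if_pos hw, hprod, mul_div_assoc]
  · simp [segExp, hw]

lemma segExp_take_mul_segExp_drop (v : EuclideanSpace ℝ (Fin d)) {w : List (Fin d)}
    (hw : w.length ≤ N) {i : ℕ} (hi : i ≤ w.length) :
    segExp N d v (w.take i) * segExp N d v (w.drop i) = w.length.choose i * segExp N d v w := by
  have hfact := Nat.choose_mul_factorial_mul_factorial hi
  have hsplit : ((w.take i).map fun a => v a).prod * ((w.drop i).map fun a => v a).prod =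
      (w.map fun a => v a).prod := by
    rw [← List.prod_append, ← List.map_append, List.take_append_drop]
  simp only [segExp, List.length_take, List.length_drop, min_eq_left hi,
    if_pos (show i ≤ N by omega), if_pos (show w.length - i ≤ N by omega), if_pos hw, ← hsplit]
  have hchoose : (w.length.choose i : ℝ) ≠ 0 := by exact_mod_cast (Nat.choose_pos hi).ne'
  rw [← hfact]
  push_cast
  field_simp

lemma segExp_neg_mul_segExp (v : EuclideanSpace ℝ (Fin d)) :
    ttaMul N d (segExp N d (-v)) (segExp N d v) = ttaOne d := by
  funext w
  by_cases hw : w.length ≤ N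
  swap
  · rw [ttaMul_apply_of_lt _ _ (by omega), ttaOne_of_ne_nil (List.ne_nil_of_length_pos (by omega))]
  rcases eq_or_ne w [] with rfl | hne
  · simp [ttaMul_apply_of_le, segExp, ttaOne]
  have hterm : ∀ i ∈ Finset.range (w.length + 1),
      segExp N d (-v) (w.take i) * segExp N d v (w.drop i) =
        ((-1) ^ i * w.length.choose i) * segExp N d v w := by
    intro i hi
    have hi : i ≤ w.length := Nat.lt_succ_iff.mp (Finset.mem_range.mp hi)
    rw [← neg_one_smul ℝ v, segExp_smul, mul_assoc, List.length_take,
      min_eq_left hi, segExp_take_mul_segExp_drop v hw hi, mul_assoc]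
  have halt : ∑ i ∈ Finset.range (w.length + 1), ((-1 : ℝ) ^ i * w.length.choose i) = 0 := by
    exact_mod_cast Int.alternating_sum_range_choose_of_ne (mt List.length_eq_zero_iff.mp hne)
  rw [ttaMul_apply_of_le _ _ hw, Finset.sum_congr rfl hterm, ← Finset.sum_mul, halt, zero_mul,
    ttaOne_of_ne_nil hne]

lemma invList_cons (v : EuclideanSpace ℝ (Fin d)) (L : List (EuclideanSpace ℝ (Fin d))) :
    invList (v :: L) = invList L ++ [-v] := by
  simp [invList]

lemma invList_invList (L : List (EuclideanSpace ℝ (Fin d))) : invList (invList L) = L := by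
  simp [invList, List.map_reverse]

lemma pwProd_invList_mul (L : List (EuclideanSpace ℝ (Fin d))) :
    ttaMul N d (pwProd N d (invList L)) (pwProd N d L) = ttaOne d := by
  induction L with
  | nil => exact ttaMul_ttaOne isTruncated_ttaOne
  | cons v L ih =>
    rw [invList_cons, pwProd_append, pwProd_singleton, pwProd_cons, ttaMul_assoc,
      ← ttaMul_assoc (segExp N d (-v)), segExp_neg_mul_segExp, ttaOne_ttaMul (isTruncated_pwProd L),
      ih]

lemma pwProd_mul_invList (L : List (EuclideanSpace ℝ (Fin d))) :
    ttaMul N d (pwProd N d L) (pwProd N d (invList L)) = ttaOne d := by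
  simpa only [invList_invList] using pwProd_invList_mul (N := N) (invList L)

lemma pwProd_invList_mul_cancel (L : List (EuclideanSpace ℝ (Fin d))) {x : TTA d}
    (hx : IsTruncated N x) :
    ttaMul N d (pwProd N d (invList L)) (ttaMul N d (pwProd N d L) x) = x := by
  rw [← ttaMul_assoc, pwProd_invList_mul, ttaOne_ttaMul hx]

lemma pwProd_mul_invList_cancel (L : List (EuclideanSpace ℝ (Fin d))) {x : TTA d}
    (hx : IsTruncated N x) :
    ttaMul N d (pwProd N d L) (ttaMul N d (pwProd N d (invList L)) x) = x := by
  rw [← ttaMul_assoc, pwProd_mul_invList, ttaOne_ttaMul hx]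

lemma ttaInv_pwProd (L : List (EuclideanSpace ℝ (Fin d))) :
    ttaInv N d (pwProd N d L) = pwProd N d (invList L) := by
  have hex : ∃ L', pwProd N d L' = pwProd N d L := ⟨L, rfl⟩
  rw [ttaInv, dif_pos hex]
  -- `ttaInv` reverses some other path `L'` with the same signature; a left inverse of
  -- `pwProd L` and a right inverse of it coincide.
  set L' := hex.choose
  calc pwProd N d (invList L')
      = ttaMul N d (pwProd N d (invList L'))
          (ttaMul N d (pwProd N d L) (pwProd N d (invList L))) := by
        rw [pwProd_mul_invList, ttaMul_ttaOne (isTruncated_pwProd _)]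
    _ = pwProd N d (invList L) := by
        rw [← hex.choose_spec, pwProd_invList_mul_cancel _ (isTruncated_pwProd _)]

noncomputable def pathLength (L : List (EuclideanSpace ℝ (Fin d))) : ℝ := (L.map fun v => ‖v‖).sum

lemma pathLength_nonneg (L : List (EuclideanSpace ℝ (Fin d))) : 0 ≤ pathLength L :=
  List.sum_nonneg (by simp)

lemma pathLength_cons (v : EuclideanSpace ℝ (Fin d)) (L : List (EuclideanSpace ℝ (Fin d))) :
    pathLength (v :: L) = ‖v‖ + pathLength L := by
  simp [pathLength]

lemma pathLength_append (A B : List (EuclideanSpace ℝ (Fin d))) :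
    pathLength (A ++ B) = pathLength A + pathLength B := by
  simp [pathLength]

lemma pathLength_invList (L : List (EuclideanSpace ℝ (Fin d))) :
    pathLength (invList L) = pathLength L := by
  simp [invList, pathLength, List.map_reverse, Function.comp_def]

lemma pathLength_flatten (Ls : List (List (EuclideanSpace ℝ (Fin d)))) :
    pathLength Ls.flatten = (Ls.map pathLength).sum := by
  induction Ls with
  | nil => simp [pathLength]
  | cons L Ls ih => rw [List.flatten_cons, pathLength_append, ih, List.map_cons, List.sum_cons]

lemma pathLength_map_smul {c : ℝ} (hc : 0 ≤ c) (L : List (EuclideanSpace ℝ (Fin d))) :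
    pathLength (L.map (c • ·)) = c * pathLength L := by
  induction L with
  | nil => simp [pathLength]
  | cons v L ih => rw [List.map_cons, pathLength_cons, pathLength_cons, ih, norm_smul,
      Real.norm_of_nonneg hc, mul_add]

lemma ccNorm_nonneg (a : TTA d) : 0 ≤ ccNorm N d a :=
  Real.sInf_nonneg (by rintro r ⟨L, -, rfl⟩; exact pathLength_nonneg L)

lemma ccNorm_le_pathLength {a : TTA d} {L : List (EuclideanSpace ℝ (Fin d))}
    (h : pwProd N d L = a) : ccNorm N d a ≤ pathLength L :=
  csInf_le ⟨0, by rintro r ⟨L, -, rfl⟩; exact pathLength_nonneg L⟩ ⟨L, h, rfl⟩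

lemma exists_pathLength_lt {a : TTA d} (ha : a ∈ FreeNilpotent N d) {δ : ℝ} (hδ : 0 < δ) :
    ∃ L, pwProd N d L = a ∧ pathLength L < ccNorm N d a + δ := by
  obtain ⟨L₀, hL₀⟩ := ha
  have hne : {r | ∃ L, pwProd N d L = a ∧ r = pathLength L}.Nonempty := ⟨_, L₀, hL₀, rfl⟩
  obtain ⟨r, ⟨L, hL, rfl⟩, hlt⟩ := Real.lt_sInf_add_pos hne hδ
  exact ⟨L, hL, hlt⟩

lemma ccNorm_pwProd_mul_le (B : List (EuclideanSpace ℝ (Fin d))) {a : TTA d}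
    (ha : a ∈ FreeNilpotent N d) :
    ccNorm N d (ttaMul N d (pwProd N d B) a) ≤ pathLength B + ccNorm N d a := by
  refine le_of_forall_pos_lt_add fun δ hδ => ?_
  obtain ⟨L, hL, hlt⟩ := exists_pathLength_lt ha hδ
  calc ccNorm N d (ttaMul N d (pwProd N d B) a)
      ≤ pathLength (B ++ L) := ccNorm_le_pathLength (by rw [pwProd_append, hL])
    _ < pathLength B + ccNorm N d a + δ := by rw [pathLength_append]; linarith

def InBox (r : ℝ) (x : TTA d) : Prop := ∀ w : List (Fin d), |x w| ≤ r ^ w.length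

lemma InBox.mono {r s : ℝ} {x : TTA d} (hx : InBox r x) (hr : 0 ≤ r) (hrs : r ≤ s) : InBox s x :=
  fun w => (hx w).trans (pow_le_pow_left₀ hr hrs _)

lemma abs_ttaMul_apply_le {x y : TTA d} {X Y : ℕ → ℝ} (hX : ∀ i, 0 ≤ X i) (hY : ∀ i, 0 ≤ Y i)
    (hx : ∀ u, |x u| ≤ X u.length) (hy : ∀ u, |y u| ≤ Y u.length) (w : List (Fin d)) :
    |ttaMul N d x y w| ≤ ∑ i ∈ Finset.range (w.length + 1), X i * Y (w.length - i) := by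
  by_cases hw : w.length ≤ N
  · rw [ttaMul_apply_of_le _ _ hw]
    refine (Finset.abs_sum_le_sum_abs _ _).trans (Finset.sum_le_sum fun i hi => ?_)
    have hi : i ≤ w.length := Nat.lt_succ_iff.mp (Finset.mem_range.mp hi)
    rw [abs_mul]
    refine mul_le_mul ?_ ?_ (abs_nonneg _) (hX i)
    · simpa [min_eq_left hi] using hx (w.take i)
    · simpa using hy (w.drop i)
  · rw [ttaMul_apply_of_lt _ _ (by omega), abs_zero]
    exact Finset.sum_nonneg fun i _ => mul_nonneg (hX i) (hY _)

lemma InBox.ttaMul {a b : ℝ} (ha : 0 ≤ a) (hb : 0 ≤ b) {x y : TTA d} (hx : InBox a x)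
    (hy : InBox b y) : InBox (a + b) (ttaMul N d x y) := by
  intro w
  refine (abs_ttaMul_apply_le (pow_nonneg ha) (pow_nonneg hb) hx hy w).trans ?_
  rw [add_pow]
  refine Finset.sum_le_sum fun i hi => le_mul_of_one_le_right (by positivity) ?_
  exact_mod_cast Nat.choose_pos (Nat.lt_succ_iff.mp (Finset.mem_range.mp hi))

lemma inBox_segExp (v : EuclideanSpace ℝ (Fin d)) : InBox ‖v‖ (segExp N d v) := by
  have hprod : ∀ u : List (Fin d), |(u.map fun a => v a).prod| ≤ ‖v‖ ^ u.length := by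
    intro u
    induction u with
    | nil => simp
    | cons a u ih =>
      rw [List.map_cons, List.prod_cons, abs_mul, List.length_cons, pow_succ']
      exact mul_le_mul (by simpa using PiLp.norm_apply_le v a) ih (abs_nonneg _) (norm_nonneg v)
  intro w
  by_cases hw : w.length ≤ N
  · rw [segExp, if_pos hw, abs_div, Nat.abs_cast]
    exact (div_le_self (abs_nonneg _) (by exact_mod_cast w.length.factorial_pos)).trans (hprod w)
  · rw [segExp, if_neg hw, abs_zero]
    positivity

lemma inBox_pwProd (L : List (EuclideanSpace ℝ (Fin d))) : InBox (pathLength L) (pwProd N d L) := by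
  induction L with
  | nil =>
    intro w
    rcases eq_or_ne w [] with rfl | hw
    · simp [pwProd, ttaOne, pathLength]
    · simp [pwProd_nil, ttaOne_of_ne_nil hw, pathLength]
  | cons v L ih =>
    rw [pwProd_cons, pathLength_cons]
    exact (inBox_segExp v).ttaMul (norm_nonneg v) (pathLength_nonneg L) ih

def dilate (c : ℝ) (x : TTA d) : TTA d := fun w => c ^ w.length * x w

lemma ttaMul_dilate (c : ℝ) (x y : TTA d) :
    ttaMul N d (dilate c x) (dilate c y) = dilate c (ttaMul N d x y) := by
  funext w
  by_cases hw : w.length ≤ N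
  · simp only [dilate, ttaMul_apply_of_le _ _ hw, Finset.mul_sum]
    refine Finset.sum_congr rfl fun i hi => ?_
    have hi : i ≤ w.length := Nat.lt_succ_iff.mp (Finset.mem_range.mp hi)
    rw [List.length_take, List.length_drop, min_eq_left hi, ← pow_sub_mul_pow c hi]
    ring
  · simp [dilate, ttaMul_apply_of_lt _ _ (not_le.mp hw)]

lemma pwProd_map_smul (c : ℝ) (L : List (EuclideanSpace ℝ (Fin d))) :
    pwProd N d (L.map (c • ·)) = dilate c (pwProd N d L) := by
  induction L with
  | nil => funext w; rcases eq_or_ne w [] with rfl | hw <;> simp [dilate, pwProd_nil, ttaOne, *]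
  | cons v L ih =>
    rw [List.map_cons, pwProd_cons, pwProd_cons, ih, ← ttaMul_dilate]
    congr 1
    funext w
    exact segExp_smul c v w

def VanishesBelow (k : ℕ) (x : TTA d) : Prop :=
  ∀ w : List (Fin d), 0 < w.length → w.length < k → x w = 0

lemma vanishesBelow_one (x : TTA d) : VanishesBelow 1 x := fun _ h₀ h₁ => by omega

lemma VanishesBelow.ttaMul {k : ℕ} {x y : TTA d} (hx : VanishesBelow k x)
    (hy : VanishesBelow k y) : VanishesBelow k (ttaMul N d x y) := by
  intro w hw₀ hwk
  by_cases hw : w.length ≤ N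
  · rw [ttaMul_apply_of_le _ _ hw]
    refine Finset.sum_eq_zero fun i hi => ?_
    rcases Nat.eq_zero_or_pos i with rfl | hi₀
    · simp [hy w hw₀ hwk]
    · rw [hx _ (by rw [List.length_take]; omega) (by rw [List.length_take]; omega), zero_mul]
  · exact ttaMul_apply_of_lt _ _ (by omega)

lemma ttaMul_apply_of_length_eq {k : ℕ} (hk : 0 < k) {x y : TTA d} (hx₀ : x [] = 1)
    (hy₀ : y [] = 1) (hx : VanishesBelow k x) {w : List (Fin d)}
    (hw : w.length = k) (hwN : w.length ≤ N) : ttaMul N d x y w = x w + y w := by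
  rw [ttaMul_apply_of_le _ _ hwN, Finset.sum_range_succ, Finset.sum_eq_single_of_mem 0
    (Finset.mem_range.mpr (hw ▸ hk))]
  · simp [hx₀, hy₀, add_comm]
  · intro i hi hi₀
    rw [Finset.mem_range] at hi
    rw [hx _ (by rw [List.length_take]; omega) (by rw [List.length_take]; omega), zero_mul]

lemma pwProd_append_apply_of_length_eq {k : ℕ} (hk : 0 < k) {A B : List (EuclideanSpace ℝ (Fin d))}
    (hA : VanishesBelow k (pwProd N d A)) {w : List (Fin d)} (hw : w.length = k) :
    pwProd N d (A ++ B) w = pwProd N d A w + pwProd N d B w := by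
  by_cases hwN : w.length ≤ N
  · rw [pwProd_append, ttaMul_apply_of_length_eq hk (pwProd_apply_nil A) (pwProd_apply_nil B) hA hw
      hwN]
  · simp [isTruncated_pwProd _ w (not_le.mp hwN)]

lemma VanishesBelow.pwProd_invList {k : ℕ} {L : List (EuclideanSpace ℝ (Fin d))}
    (hL : VanishesBelow k (pwProd N d L)) : VanishesBelow k (pwProd N d (invList L)) := by
  intro w hw₀ hwk
  by_cases hwN : w.length ≤ N
  · have h := congrFun (pwProd_invList_mul (N := N) L) w
    rw [ttaMul_apply_of_le _ _ hwN, ttaOne_of_ne_nil (List.ne_nil_of_length_pos hw₀),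
      Finset.sum_eq_single_of_mem w.length (by simp)] at h
    · simpa [pwProd_apply_nil] using h
    · intro i hi hne
      rw [Finset.mem_range] at hi
      rw [hL _ (by rw [List.length_drop]; omega) (by rw [List.length_drop]; omega), mul_zero]
  · exact isTruncated_pwProd _ w (not_le.mp hwN)

lemma pwProd_invList_apply_of_length_eq {k : ℕ} (hk : 0 < k) {L : List (EuclideanSpace ℝ (Fin d))}
    (hL : VanishesBelow k (pwProd N d L)) {w : List (Fin d)} (hw : w.length = k) :
    pwProd N d (invList L) w = -pwProd N d L w := by
  have h := pwProd_append_apply_of_length_eq (B := L) hk hL.pwProd_invList hw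
  rw [pwProd_append, pwProd_invList_mul,
    ttaOne_of_ne_nil (List.ne_nil_of_length_pos (by omega))] at h
  linarith

def level (k : ℕ) (x : TTA d) : List.Vector (Fin d) k → ℝ := fun w => x w.1

lemma level_pwProd_append {k : ℕ} (hk : 0 < k) {A B : List (EuclideanSpace ℝ (Fin d))}
    (hA : VanishesBelow k (pwProd N d A)) :
    level k (pwProd N d (A ++ B)) = level k (pwProd N d A) + level k (pwProd N d B) :=
  funext fun w => pwProd_append_apply_of_length_eq hk hA w.2

/-- A dilation rescales the degree-`k` part by `|c|`, and path reversal flips its sign. -/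
lemma exists_level_pwProd_eq_smul {k : ℕ} (hk : 0 < k) {L : List (EuclideanSpace ℝ (Fin d))}
    (hL : VanishesBelow k (pwProd N d L)) (c : ℝ) :
    ∃ R, VanishesBelow k (pwProd N d R) ∧ level k (pwProd N d R) = c • level k (pwProd N d L) ∧
      pathLength R = |c| ^ (k : ℝ)⁻¹ * pathLength L := by
  set μ := |c| ^ (k : ℝ)⁻¹
  have hμ : 0 ≤ μ := by positivity
  have hμk : μ ^ k = |c| := Real.rpow_inv_natCast_pow (abs_nonneg c) hk.ne'
  have hdil : VanishesBelow k (pwProd N d (L.map (μ • ·))) := fun w hw₀ hwk => by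
    rw [pwProd_map_smul, dilate, hL w hw₀ hwk, mul_zero]
  have hdil_level : level k (pwProd N d (L.map (μ • ·))) = |c| • level k (pwProd N d L) := by
    funext w
    simp [level, pwProd_map_smul, dilate, w.2, hμk]
  rcases le_or_gt 0 c with hc | hc
  · refine ⟨L.map (μ • ·), hdil, ?_, pathLength_map_smul hμ L⟩
    rw [hdil_level, abs_of_nonneg hc]
  · refine ⟨invList (L.map (μ • ·)), hdil.pwProd_invList, ?_, ?_⟩
    · funext w
      have h := congrFun hdil_level w
      simp only [level, Pi.smul_apply, smul_eq_mul] at h ⊢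
      rw [pwProd_invList_apply_of_length_eq hk hdil w.2, h, abs_of_neg hc]
      ring
    · rw [pathLength_invList, pathLength_map_smul hμ]

lemma level_pwProd_flatten {k : ℕ} (hk : 0 < k) (Ls : List (List (EuclideanSpace ℝ (Fin d))))
    (hLs : ∀ L ∈ Ls, VanishesBelow k (pwProd N d L)) :
    VanishesBelow k (pwProd N d Ls.flatten) ∧
      level k (pwProd N d Ls.flatten) = (Ls.map fun L => level k (pwProd N d L)).sum := by
  induction Ls with
  | nil =>
    refine ⟨fun w hw₀ _ => ttaOne_of_ne_nil (List.ne_nil_of_length_pos hw₀), ?_⟩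
    funext w
    exact ttaOne_of_ne_nil (List.ne_nil_of_length_pos (by rw [w.2]; exact hk))
  | cons L Ls ih =>
    obtain ⟨hvan, hlevel⟩ := ih fun L' hL' => hLs L' (List.mem_cons_of_mem L hL')
    have hL := hLs L List.mem_cons_self
    rw [List.flatten_cons, List.map_cons, List.sum_cons, level_pwProd_append hk hL, hlevel,
      pwProd_append]
    exact ⟨hL.ttaMul hvan, rfl⟩

def levelSubmodule (N d k : ℕ) (hk : 0 < k) : Submodule ℝ (List.Vector (Fin d) k → ℝ) where
  carrier := {ξ | ∃ L, VanishesBelow k (pwProd N d L) ∧ level k (pwProd N d L) = ξ}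
  zero_mem' := by
    obtain ⟨hvan, hlevel⟩ := level_pwProd_flatten (N := N) hk [] (by simp)
    exact ⟨[], hvan, hlevel⟩
  add_mem' := by
    rintro _ _ ⟨A, hA, rfl⟩ ⟨B, hB, rfl⟩
    exact ⟨A ++ B, by rw [pwProd_append]; exact hA.ttaMul hB, level_pwProd_append hk hA⟩
  smul_mem' := by
    rintro c _ ⟨L, hL, rfl⟩
    obtain ⟨R, hR, hlevel, -⟩ := exists_level_pwProd_eq_smul hk hL c
    exact ⟨R, hR, hlevel⟩

lemma norm_level_le {ε : ℝ} (hε : 0 ≤ ε) {x : TTA d} (hx : InBox ε x) (k : ℕ) :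
    ‖level k x‖ ≤ ε ^ k :=
  (pi_norm_le_iff_of_nonneg (by positivity)).mpr fun w => by
    simpa [level, w.2] using hx w.1

lemma exists_level_pwProd_eq_of_inBox {k : ℕ} (hk : 0 < k) :
    ∃ C : ℝ, 0 ≤ C ∧ ∀ ε : ℝ, 0 ≤ ε → ∀ L : List (EuclideanSpace ℝ (Fin d)),
      VanishesBelow k (pwProd N d L) → InBox ε (pwProd N d L) →
      ∃ B, VanishesBelow k (pwProd N d B) ∧ level k (pwProd N d B) = level k (pwProd N d L) ∧
        pathLength B ≤ C * ε := by
  obtain ⟨M, u, D, hu, hD, hrepr⟩ := (levelSubmodule N d k hk).exists_eq_sum_smul_abs_le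
  choose Λ hΛ hΛlevel using hu
  set C := ∑ j, D ^ (k : ℝ)⁻¹ * pathLength (Λ j)
  refine ⟨C, Finset.sum_nonneg fun j _ => by have := pathLength_nonneg (Λ j); positivity, ?_⟩
  intro ε hε L hvan hbox
  obtain ⟨c, hc, hsum⟩ := hrepr _ ⟨L, hvan, rfl⟩
  choose R hR hRlevel hRlen using fun j => exists_level_pwProd_eq_smul hk (hΛ j) (c j)
  obtain ⟨hBvan, hBlevel⟩ := level_pwProd_flatten hk (List.ofFn R) (by simpa using hR)
  refine ⟨_, hBvan, ?_, ?_⟩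
  · rw [hBlevel, hsum, List.map_ofFn, List.sum_ofFn]
    exact Finset.sum_congr rfl fun j _ => by rw [Function.comp_apply, hRlevel, hΛlevel]
  · rw [pathLength_flatten, List.map_ofFn, List.sum_ofFn, Finset.sum_mul]
    refine Finset.sum_le_sum fun j _ => ?_
    have hcj : |c j| ^ (k : ℝ)⁻¹ ≤ D ^ (k : ℝ)⁻¹ * ε := by
      calc |c j| ^ (k : ℝ)⁻¹ ≤ (D * ε ^ k) ^ (k : ℝ)⁻¹ := by
            gcongr
            exact (hc j).trans (mul_le_mul_of_nonneg_left (norm_level_le hε hbox k) hD)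
        _ = D ^ (k : ℝ)⁻¹ * ε := by
            rw [Real.mul_rpow hD (by positivity), Real.pow_rpow_inv_natCast hε hk.ne']
    rw [Function.comp_apply, hRlen]
    have := pathLength_nonneg (Λ j)
    nlinarith

lemma exists_pathLength_le_vanishesBelow_succ {k : ℕ} (hk : 0 < k) :
    ∃ C : ℝ, 0 ≤ C ∧ ∀ ε : ℝ, 0 ≤ ε → ∀ a ∈ FreeNilpotent N d, VanishesBelow k a → InBox ε a →
      ∃ B, pathLength B ≤ C * ε ∧
        VanishesBelow (k + 1) (ttaMul N d (pwProd N d (invList B)) a) ∧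
        InBox ((C + 1) * ε) (ttaMul N d (pwProd N d (invList B)) a) := by
  obtain ⟨C, hC, hlevel⟩ := exists_level_pwProd_eq_of_inBox (N := N) (d := d) hk
  refine ⟨C, hC, ?_⟩
  rintro ε hε _ ⟨L, rfl⟩ hvan hbox
  obtain ⟨B, hBvan, hB, hlen⟩ := hlevel ε hε L hvan hbox
  refine ⟨B, hlen, ?_, ?_⟩
  · intro w hw₀ hwk
    rcases Nat.lt_succ_iff_lt_or_eq.mp hwk with hwk | rfl
    · exact (hBvan.pwProd_invList.ttaMul hvan) w hw₀ hwk
    · have hBw : pwProd N d B w = pwProd N d L w := congrFun hB ⟨w, rfl⟩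
      rw [← pwProd_append, pwProd_append_apply_of_length_eq hw₀ hBvan.pwProd_invList rfl,
        pwProd_invList_apply_of_length_eq hw₀ hBvan rfl, hBw, neg_add_cancel]
  · rw [add_mul, one_mul]
    exact ((inBox_pwProd _).mono (pathLength_nonneg _) (by rwa [pathLength_invList])).ttaMul
      (mul_nonneg hC hε) hε hbox

lemma eq_ttaOne_of_vanishesBelow {a : TTA d} (ha : a ∈ FreeNilpotent N d)
    (hvan : VanishesBelow (N + 1) a) : a = ttaOne d := by
  obtain ⟨L, rfl⟩ := ha
  funext w
  rcases eq_or_ne w [] with rfl | hw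
  · exact pwProd_apply_nil L
  · rw [ttaOne_of_ne_nil hw]
    rcases le_or_gt w.length N with hwN | hwN
    · exact hvan w (List.length_pos_of_ne_nil hw) (by omega)
    · exact isTruncated_pwProd L w hwN

lemma exists_ccNorm_le_of_vanishesBelow_of_inBox {k : ℕ} (hk : 0 < k) (hkN : k ≤ N + 1) :
    ∃ C : ℝ, 0 < C ∧ ∀ ε : ℝ, 0 ≤ ε → ∀ a ∈ FreeNilpotent N d, VanishesBelow k a → InBox ε a →
      ccNorm N d a ≤ C * ε := by
  induction hkN using Nat.decreasingInduction with
  | self =>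
    refine ⟨1, one_pos, fun ε hε a ha hvan _ => ?_⟩
    rw [eq_ttaOne_of_vanishesBelow ha hvan]
    exact (ccNorm_le_pathLength (L := []) pwProd_nil).trans (by simpa [pathLength] using hε)
  | of_succ k _ ih =>
    obtain ⟨C', hC', hnext⟩ := ih (Nat.succ_pos k)
    obtain ⟨C, hC, hstep⟩ := exists_pathLength_le_vanishesBelow_succ (N := N) (d := d) hk
    refine ⟨C + C' * (C + 1), by positivity, fun ε hε a ha hvan hbox => ?_⟩
    obtain ⟨B, hB, hvan', hbox'⟩ := hstep ε hε a ha hvan hbox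
    obtain ⟨La, rfl⟩ := ha
    set a' := ttaMul N d (pwProd N d (invList B)) (pwProd N d La)
    have ha' : a' ∈ FreeNilpotent N d := ⟨invList B ++ La, pwProd_append _ _⟩
    calc ccNorm N d (pwProd N d La) = ccNorm N d (ttaMul N d (pwProd N d B) a') := by
          rw [pwProd_mul_invList_cancel B (isTruncated_pwProd La)]
      _ ≤ pathLength B + ccNorm N d a' := ccNorm_pwProd_mul_le B ha'
      _ ≤ C * ε + C' * ((C + 1) * ε) :=
          add_le_add hB (hnext _ (by positivity) _ ha' hvan' hbox')
      _ = (C + C' * (C + 1)) * ε := by ring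

lemma exists_ccNorm_le_of_inBox :
    ∃ C : ℝ, 0 < C ∧ ∀ ε : ℝ, 0 ≤ ε → ∀ a ∈ FreeNilpotent N d, InBox ε a →
      ccNorm N d a ≤ C * ε := by
  obtain ⟨C, hC, hbound⟩ := exists_ccNorm_le_of_vanishesBelow_of_inBox (N := N) (d := d) one_pos
    (by omega)
  exact ⟨C, hC, fun ε hε a ha hbox => hbound ε hε a ha (vanishesBelow_one a) hbox⟩

lemma ttaMul_ttaMul_eq_ttaOne_add {x h g : TTA d} (hx : IsTruncated N x)
    (hxg : ttaMul N d x g = ttaOne d) :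
    ttaMul N d (ttaMul N d x h) g = ttaOne d + ttaMul N d (ttaMul N d x (h - ttaOne d)) g := by
  conv_lhs => rw [← add_sub_cancel (ttaOne d) h]
  rw [ttaMul_add, ttaMul_ttaOne hx, add_ttaMul, hxg]

lemma abs_ttaMul_ttaMul_apply_le {x y z : TTA d} {X Y Z : ℕ → ℝ} (hX : ∀ i, 0 ≤ X i)
    (hY : ∀ i, 0 ≤ Y i) (hZ : ∀ i, 0 ≤ Z i) (hx : ∀ u, |x u| ≤ X u.length)
    (hy : ∀ u, |y u| ≤ Y u.length) (hz : ∀ u, |z u| ≤ Z u.length) (w : List (Fin d)) {M : ℝ}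
    (hM : ∀ i j, i ≤ j → j ≤ w.length → X i * Y (j - i) * Z (w.length - j) ≤ M) :
    |ttaMul N d (ttaMul N d x y) z w| ≤ (w.length + 1) ^ 2 * M := by
  set n := w.length
  have hM₀ : 0 ≤ M := (mul_nonneg (mul_nonneg (hX 0) (hY 0)) (hZ n)).trans (hM 0 0 le_rfl n.zero_le)
  set F : ℕ → ℝ := fun j => ∑ i ∈ Finset.range (j + 1), X i * Y (j - i)
  have hF : ∀ j, 0 ≤ F j := fun j => Finset.sum_nonneg fun i _ => mul_nonneg (hX i) (hY _)
  calc _ ≤ ∑ j ∈ Finset.range (n + 1), F j * Z (n - j) :=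
        abs_ttaMul_apply_le hF hZ (abs_ttaMul_apply_le hX hY hx hy) hz w
    _ = ∑ j ∈ Finset.range (n + 1), ∑ i ∈ Finset.range (j + 1), X i * Y (j - i) * Z (n - j) :=
        Finset.sum_congr rfl fun j _ => Finset.sum_mul _ _ _
    _ ≤ ∑ j ∈ Finset.range (n + 1), ∑ i ∈ Finset.range (n + 1), M := by
        refine Finset.sum_le_sum fun j hj => ?_
        have hj : j ≤ n := Nat.lt_succ_iff.mp (Finset.mem_range.mp hj)
        calc _ ≤ ∑ i ∈ Finset.range (j + 1), M := Finset.sum_le_sum fun i hi =>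
              hM i j (Nat.lt_succ_iff.mp (Finset.mem_range.mp hi)) hj
          _ ≤ _ := Finset.sum_le_sum_of_subset_of_nonneg (Finset.range_subset_range.mpr (by omega))
              fun _ _ _ => hM₀
    _ = (n + 1) ^ 2 * M := by simp; ring

lemma inBox_conj {s t ε : ℝ} (hs : 0 ≤ s) (ht : 0 ≤ t) (hε : 0 ≤ ε)
    (hmono : ∀ q n : ℕ, 1 ≤ q → q ≤ n → n ≤ N → t ^ q * s ^ (n - q) ≤ ε ^ n)
    {G H : List (EuclideanSpace ℝ (Fin d))} (hG : pathLength G ≤ s) (hH : pathLength H ≤ t) :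
    InBox (4 * ε)
      (ttaMul N d (ttaMul N d (pwProd N d (invList G)) (pwProd N d H)) (pwProd N d G)) := by
  -- `h - 1` has no constant term, which puts a factor `t` into every monomial below.
  set T : ℕ → ℝ := fun q => if q = 0 then 0 else t ^ q
  have hδ : ∀ u, |(pwProd N d H - ttaOne d) u| ≤ T u.length := by
    intro u
    rcases eq_or_ne u [] with rfl | hu
    · simp [T, pwProd_apply_nil, ttaOne]
    · simpa [T, ttaOne_of_ne_nil hu, hu] using (inBox_pwProd H).mono (pathLength_nonneg H) hH u
  intro w
  rcases eq_or_ne w [] with rfl | hw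
  · simp [← pwProd_append, pwProd_apply_nil]
  rw [ttaMul_ttaMul_eq_ttaOne_add (isTruncated_pwProd _) (pwProd_invList_mul G), Pi.add_apply,
    ttaOne_of_ne_nil hw, zero_add]
  set n := w.length
  rcases lt_or_ge N n with hnN | hnN
  · rw [isTruncated_ttaMul _ _ w hnN, abs_zero]
    positivity
  have hterm : ∀ i j, i ≤ j → j ≤ n → s ^ i * T (j - i) * s ^ (n - j) ≤ ε ^ n := by
    intro i j hij hjn
    rcases eq_or_lt_of_le hij with rfl | hij
    · simpa [T] using pow_nonneg hε n
    · simp only [T, if_neg (show j - i ≠ 0 by omega)]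
      calc s ^ i * t ^ (j - i) * s ^ (n - j) = t ^ (j - i) * s ^ (n - (j - i)) := by
            rw [mul_comm (s ^ i), mul_assoc, ← pow_add, show i + (n - j) = n - (j - i) by omega]
        _ ≤ ε ^ n := hmono (j - i) n (by omega) (by omega) hnN
  calc _ ≤ ((n : ℝ) + 1) ^ 2 * ε ^ n :=
        abs_ttaMul_ttaMul_apply_le (X := (s ^ ·)) (Z := (s ^ ·)) (fun _ => pow_nonneg hs _)
          (fun q => by positivity) (fun _ => pow_nonneg hs _)
          ((inBox_pwProd _).mono (pathLength_nonneg _) (by rwa [pathLength_invList])) hδ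
          ((inBox_pwProd _).mono (pathLength_nonneg _) hG) w hterm
    _ ≤ ((2 ^ n : ℕ) : ℝ) ^ 2 * ε ^ n := by gcongr; exact_mod_cast Nat.lt_two_pow_self
    _ = (4 * ε) ^ n := by push_cast; rw [← pow_mul, mul_comm n, pow_mul, mul_pow]; norm_num

lemma ccNorm_conj_le {C : ℝ}
    (hball : ∀ ε : ℝ, 0 ≤ ε → ∀ a ∈ FreeNilpotent N d, InBox ε a → ccNorm N d a ≤ C * ε)
    {g h : TTA d} (hg : g ∈ FreeNilpotent N d) (hh : h ∈ FreeNilpotent N d) {ρ : ℝ} (hρ : 0 < ρ) :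
    ccNorm N d (ttaMul N d (ttaMul N d (ttaInv N d g) h) g) ≤
      C * (4 * max (ccNorm N d h + ρ)
        ((ccNorm N d h + ρ) ^ (N : ℝ)⁻¹ * (ccNorm N d g + ρ) ^ (1 - (N : ℝ)⁻¹))) := by
  obtain ⟨G, rfl, hG⟩ := exists_pathLength_lt hg hρ
  obtain ⟨H, rfl, hH⟩ := exists_pathLength_lt hh hρ
  have ht : 0 < ccNorm N d (pwProd N d H) + ρ := by linarith [ccNorm_nonneg (N := N) (pwProd N d H)]
  have hs : 0 < ccNorm N d (pwProd N d G) + ρ := by linarith [ccNorm_nonneg (N := N) (pwProd N d G)]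
  rw [ttaInv_pwProd]
  refine hball _ (by positivity) _ ⟨invList G ++ H ++ G, by rw [pwProd_append, pwProd_append]⟩ ?_
  exact inBox_conj hs.le ht.le (by positivity)
    (fun q n hq hqn hnN => pow_mul_pow_sub_le_max_pow ht hs hq hqn hnN) hG.le hH.le

end TTA

theorem stmt_14_general (N d : ℕ) :
    ∃ C : ℝ, 0 < C ∧
      ∀ g h : TTA d, g ∈ FreeNilpotent N d → h ∈ FreeNilpotent N d →
        ccNorm N d (ttaMul N d (ttaMul N d (ttaInv N d g) h) g) ≤
          C * max (ccNorm N d h)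
            ((ccNorm N d h) ^ ((N : ℝ)⁻¹) * (ccNorm N d g) ^ (1 - (N : ℝ)⁻¹)) := by
  obtain ⟨C, hC, hball⟩ := TTA.exists_ccNorm_le_of_inBox (N := N) (d := d)
  refine ⟨C * 4, by positivity, fun g h hg hh => ?_⟩
  have hα : (0 : ℝ) ≤ (N : ℝ)⁻¹ := by positivity
  have hα' : (0 : ℝ) ≤ 1 - (N : ℝ)⁻¹ := sub_nonneg.mpr (Nat.cast_inv_le_one N)
  have hcont : ContinuousAt (fun ρ : ℝ => C * (4 * max (ccNorm N d h + ρ)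
      ((ccNorm N d h + ρ) ^ (N : ℝ)⁻¹ * (ccNorm N d g + ρ) ^ (1 - (N : ℝ)⁻¹)))) 0 := by
    have hshift : ∀ c : ℝ, ContinuousAt (fun ρ : ℝ => c + ρ) 0 :=
      fun c => continuousAt_const.add continuousAt_id
    exact continuousAt_const.mul (continuousAt_const.mul ((hshift _).max
      (((hshift _).rpow_const (Or.inr hα)).mul ((hshift _).rpow_const (Or.inr hα')))))
  have hlim := ge_of_tendsto (hcont.tendsto.mono_left nhdsWithin_le_nhds)
    (eventually_nhdsWithin_of_forall (s := Set.Ioi 0) fun ρ hρ => TTA.ccNorm_conj_le hball hg hh hρ)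
  simpa [mul_assoc] using hlim

/-- for `g, h ∈ G^N(ℝ^d)` there is `C = C(N,d)` with
`‖g⁻¹ ⊗ h ⊗ g‖ ≤ C max{‖h‖, ‖h‖^{1/N} ‖g‖^{1-1/N}}` in Carnot–Carathéodory norm. -/
theorem stmt_14 (N d : ℕ) (hN : 1 ≤ N) :
    ∃ C : ℝ, 0 < C ∧
      ∀ g h : TTA d, g ∈ FreeNilpotent N d → h ∈ FreeNilpotent N d →
        ccNorm N d (ttaMul N d (ttaMul N d (ttaInv N d g) h) g) ≤
          C * max (ccNorm N d h)
            ((ccNorm N d h) ^ ((N : ℝ)⁻¹) * (ccNorm N d g) ^ (1 - (N : ℝ)⁻¹)) :=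
  stmt_14_general N d
end
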